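/- arXiv:2509.09144 — 4 statements merged into one kernel-verified Lean document; each statement's English description precedes it below -/
import Mathlib

section
/- Under the shared clustering-perturbation setup, suppose additionally that there is δ > 0 such that for every k ∈ [K], h(D_k)²/2 ≥ δ, where h(D_k) := min over nonempty proper subsets 𝓘 ⊊ D_k of ( Σ_{i∈𝓘} Σ_{j∈D_k∖𝓘} A_{ij} ) / min( Σ_{i∈𝓘} d_i^{(k)}, Σ_{j∈D_k∖𝓘} d_j^{(k)} ), and let ĥ(D_k) be defined by the same formula with A replaced by Â and d_i^{(k)} by d̂_i^{(k)}. Then for every k ∈ [K], ĥ(D_k)²/2 ≥ δ − A₅·ε, where A₅ = 5M³c/(8m³). -/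
lemma gauss_core (σ : ℝ) (hσ : 0 < σ) (x : ℝ) :
    |x| / σ ^ 2 * Real.exp (-x ^ 2 / (2 * σ ^ 2)) ≤ 1 / (σ * Real.sqrt (Real.exp 1)) := by
  have hs : Real.sqrt (Real.exp 1) = Real.exp (1/2) := by
    rw [← Real.exp_half]
  set t : ℝ := |x| / σ with ht
  have ht0 : 0 ≤ t := div_nonneg (abs_nonneg x) hσ.le
  have h1 : t ≤ Real.exp ((t ^ 2 - 1) / 2) := by
    have := Real.add_one_le_exp ((t ^ 2 - 1) / 2)
    nlinarith [sq_nonneg (t - 1)]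
  have h2 : t * Real.exp ((1 - t ^ 2) / 2) ≤ 1 := by
    calc t * Real.exp ((1 - t ^ 2) / 2)
        ≤ Real.exp ((t ^ 2 - 1) / 2) * Real.exp ((1 - t ^ 2) / 2) :=
          mul_le_mul_of_nonneg_right h1 (Real.exp_pos _).le
      _ = 1 := by rw [← Real.exp_add]; ring_nf; exact Real.exp_zero
  have ht2 : t ^ 2 = x ^ 2 / σ ^ 2 := by
    rw [ht, div_pow, sq_abs]
  have hE : (1 - t ^ 2) / 2 = 1/2 + -x ^ 2 / (2 * σ ^ 2) := by
    rw [ht2]; field_simp; ring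
  rw [hE, Real.exp_add] at h2
  rw [hs]
  rw [le_div_iff₀ (by positivity)]
  rw [ht] at h2
  calc |x| / σ ^ 2 * Real.exp (-x ^ 2 / (2 * σ ^ 2)) * (σ * Real.exp (1/2))
      = (|x| / σ * (Real.exp (1/2) * Real.exp (-x ^ 2 / (2 * σ ^ 2)))) * σ * σ / σ ^ 2 * 1 := by
        field_simp
    _ ≤ 1 * σ * σ / σ ^ 2 * 1 := by
        gcongr
    _ = 1 := by field_simp

lemma gauss_lip (σ : ℝ) (hσ : 0 < σ) (x y : ℝ) :
    |Real.exp (-x ^ 2 / (2 * σ ^ 2)) - Real.exp (-y ^ 2 / (2 * σ ^ 2))|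
      ≤ 1 / (σ * Real.sqrt (Real.exp 1)) * |x - y| := by
  set f : ℝ → ℝ := fun z => Real.exp (-z ^ 2 / (2 * σ ^ 2)) with hf
  have hder : ∀ z : ℝ, HasDerivAt f (Real.exp (-z ^ 2 / (2 * σ ^ 2)) * (-(2 * z) / (2 * σ ^ 2))) z := by
    intro z
    have h1 : HasDerivAt (fun w : ℝ => -w ^ 2 / (2 * σ ^ 2)) (-(2 * z) / (2 * σ ^ 2)) z := by
      have := ((hasDerivAt_pow 2 z).neg).div_const (2 * σ ^ 2)
      simpa using this
    exact h1.exp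
  have hbound : ∀ z ∈ (Set.univ : Set ℝ), ‖deriv f z‖ ≤ 1 / (σ * Real.sqrt (Real.exp 1)) := by
    intro z _
    rw [(hder z).deriv]
    have : ‖Real.exp (-z ^ 2 / (2 * σ ^ 2)) * (-(2 * z) / (2 * σ ^ 2))‖
        = |z| / σ ^ 2 * Real.exp (-z ^ 2 / (2 * σ ^ 2)) := by
      rw [Real.norm_eq_abs, abs_mul, abs_of_pos (Real.exp_pos _), abs_div]
      rw [abs_of_pos (by positivity : (0:ℝ) < 2 * σ ^ 2)]
      rw [abs_neg, abs_mul, abs_two]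
      ring
    rw [this]
    exact gauss_core σ hσ z
  have := Convex.norm_image_sub_le_of_norm_deriv_le
    (s := (Set.univ : Set ℝ)) (f := f)
    (fun z _ => (hder z).differentiableAt) hbound convex_univ
    (Set.mem_univ y) (Set.mem_univ x)
  simpa [Real.norm_eq_abs] using this


set_option maxHeartbeats 1000000 in
/-- Abstract perturbation bound for ratios of the conductance type. -/
lemma ratio_pert (n nh vI vJ vhI vhJ t T Mk Mr m c ε : ℝ)
    (hmpos : 0 < m) (hcε : 0 < c * ε)
    (ht1 : 1 ≤ t) (htT : t ≤ T) (htT2 : t + T = Mk) (hMkM : Mk ≤ Mr)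
    (n0 : 0 ≤ n) (nh0 : 0 ≤ nh)
    (n_le_vI : n ≤ vI) (n_le_vJ : n ≤ vJ)
    (nh_le_vhI : nh ≤ vhI) (nh_le_vhJ : nh ≤ vhJ)
    (vI_lb : m * (Mk - 1) * t ≤ vI) (vJ_lb : m * (Mk - 1) * t ≤ vJ)
    (vhI_lb : m / 2 * (Mk - 1) * t ≤ vhI) (vhJ_lb : m / 2 * (Mk - 1) * t ≤ vhJ)
    (n_diff : |n - nh| ≤ c * ε * (t * T))
    (vI_diff : |vI - vhI| ≤ (Mk - 1) * (c * ε) * T)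
    (vJ_diff : |vJ - vhJ| ≤ (Mk - 1) * (c * ε) * T) :
    n / min vI vJ - nh / min vhI vhJ ≤ c * ε * Mr / m := by
  have hT1 : 1 ≤ T := ht1.trans htT
  have hMk2 : 2 ≤ Mk := by linarith
  have hMk1 : (0:ℝ) < Mk - 1 := by linarith only [hMk2]
  set s : ℝ := min vI vJ with hs
  set sh : ℝ := min vhI vhJ with hsh
  have s_lb : m * (Mk - 1) * t ≤ s := le_min vI_lb vJ_lb
  have sh_lb : m / 2 * (Mk - 1) * t ≤ sh := le_min vhI_lb vhJ_lb
  have s_pos : 0 < s := lt_of_lt_of_le (by positivity) s_lb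
  have sh_pos : 0 < sh := lt_of_lt_of_le (by positivity) sh_lb
  have n_le_s : n ≤ s := le_min n_le_vI n_le_vJ
  have nh_le_sh : nh ≤ sh := le_min nh_le_vhI nh_le_vhJ
  have s_diff : |sh - s| ≤ (Mk - 1) * (c * ε) * T := by
    rw [abs_sub_comm]
    calc |s - sh| ≤ max |vI - vhI| |vJ - vhJ| := abs_min_sub_min_le_max _ _ _ _
      _ ≤ (Mk - 1) * (c * ε) * T := max_le vI_diff vJ_diff
  have hs0 : s ≠ 0 := ne_of_gt s_pos
  have hsh0 : sh ≠ 0 := ne_of_gt sh_pos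
  have e1 : n / s - nh / sh = (n - nh) / s + nh / sh * ((sh - s) / s) := by
    field_simp
    ring
  have e2 : (n - nh) / s ≤ |n - nh| / s := by
    gcongr
    exact le_abs_self _
  have e3 : nh / sh * ((sh - s) / s) ≤ |sh - s| / s := by
    have r0 : 0 ≤ nh / sh := div_nonneg nh0 sh_pos.le
    have r1 : nh / sh ≤ 1 := (div_le_one sh_pos).2 nh_le_sh
    have hax : |sh - s| / s = |(sh - s) / s| := by
      rw [abs_div, abs_of_pos s_pos]
    rw [hax]
    nlinarith [le_abs_self ((sh - s) / s), abs_nonneg ((sh - s) / s),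
      mul_nonneg (sub_nonneg.2 r1) (abs_nonneg ((sh - s) / s)),
      mul_nonneg r0 (sub_nonneg.2 (le_abs_self ((sh - s) / s)))]
  have e4 : (|n - nh| + |sh - s|) / s = |n - nh| / s + |sh - s| / s := add_div _ _ _
  have key4 : n / s - nh / sh ≤ (|n - nh| + |sh - s|) / s := by
    rw [e1, e4]; linarith
  refine key4.trans ?_
  have den_pos : 0 < m * (Mk - 1) * t := by positivity
  have step1 : (|n - nh| + |sh - s|) / s
      ≤ (c * ε * (t * T) + (Mk - 1) * (c * ε) * T) / (m * (Mk - 1) * t) :=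
    div_le_div₀ (by positivity) (by linarith) den_pos s_lb
  refine step1.trans ?_
  rw [div_le_iff₀ den_pos]
  have hrw : c * ε * Mr / m * (m * (Mk - 1) * t) = c * ε * Mr * ((Mk - 1) * t) := by
    field_simp
  rw [hrw]
  have ht1' : (0:ℝ) ≤ t - 1 := by linarith
  have hT0 : (0:ℝ) ≤ T := by linarith
  have hpoly : t * T + (Mk - 1) * T ≤ Mr * ((Mk - 1) * t) := by
    have expand : (t + T) * ((t + T - 1) * t) - (t * T + (t + T - 1) * T)
        = (t - 1) * ((t - 1) ^ 2 + 2 * (t - 1) + 1 + 2 * (t - 1) * T + T + T ^ 2) := by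
      ring
    have inner0 : (0:ℝ) ≤ (t - 1) ^ 2 + 2 * (t - 1) + 1 + 2 * (t - 1) * T + T + T ^ 2 := by
      nlinarith [sq_nonneg (t - 1), sq_nonneg T, mul_nonneg ht1' hT0]
    have h1 : t * T + (t + T - 1) * T ≤ (t + T) * ((t + T - 1) * t) := by
      nlinarith [mul_nonneg ht1' inner0, expand]
    have h2 : (t + T) * ((t + T - 1) * t) ≤ Mr * ((t + T - 1) * t) := by
      apply mul_le_mul_of_nonneg_right (htT2 ▸ hMkM)
      nlinarith
    rw [← htT2]
    linarith
  nlinarith [mul_le_mul_of_nonneg_left hpoly hcε.le]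

set_option maxHeartbeats 1000000 in
/-- Claim on the conductance-type quantity `h(D_k)`:
under the shared clustering-perturbation setup, if `h(D_k)²/2 ≥ δ` for every
cluster, then the estimated version satisfies `ĥ(D_k)²/2 ≥ δ − A₅·ε` with
`A₅ = 5M³c/(8m³)`. -/
theorem conductance_perturbation_bound
    (M K : ℕ) (hM : 2 ≤ M) (hK : 1 ≤ K)
    -- the clusters: a partition of [M] into K clusters, each of size ≥ 2
    (D : Fin K → Finset (Fin M))
    (hDdisj : ∀ k l : Fin K, k ≠ l → Disjoint (D k) (D l))
    (hDcover : ∀ i : Fin M, ∃ k : Fin K, i ∈ D k)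
    (hDcard : ∀ k : Fin K, 2 ≤ (D k).card)
    -- true and estimated distances: nonnegative, symmetric, zero diagonal
    (d dh : Fin M → Fin M → ℝ)
    (hd0 : ∀ i j, 0 ≤ d i j) (hdh0 : ∀ i j, 0 ≤ dh i j)
    (hdsymm : ∀ i j, d i j = d j i) (hdhsymm : ∀ i j, dh i j = dh j i)
    (hddiag : ∀ i, d i i = 0) (hdhdiag : ∀ i, dh i i = 0)
    -- affinity matrices
    (σa : ℝ) (hσa : 0 < σa)
    (A Ah : Fin M → Fin M → ℝ)
    (hA : ∀ i j, A i j = if i = j then 0 else Real.exp (-(d i j) ^ 2 / (2 * σa ^ 2)))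
    (hAh : ∀ i j, Ah i j = if i = j then 0 else Real.exp (-(dh i j) ^ 2 / (2 * σa ^ 2)))
    -- cluster degrees
    (deg degh : Fin K → Fin M → ℝ)
    (hdeg : ∀ k i, deg k i = ∑ j ∈ D k, A i j)
    (hdegh : ∀ k i, degh k i = ∑ j ∈ D k, Ah i j)
    -- m = min intra-cluster true affinity, c = Lipschitz constant of the kernel
    (m c : ℝ)
    (hc : c = 1 / (σa * Real.sqrt (Real.exp 1)))
    (hm_le : ∀ k : Fin K, ∀ i ∈ D k, ∀ j ∈ D k, i ≠ j → m ≤ A i j)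
    (hm_attained : ∃ k : Fin K, ∃ i ∈ D k, ∃ j ∈ D k, i ≠ j ∧ m = A i j)
    -- the estimation error event
    (ε : ℝ) (hε : 0 < ε) (hεlt : ε < m / (2 * c))
    (hclose : ∀ i j : Fin M, i ≠ j → |dh i j - d i j| < ε)
    -- h(D_k) and ĥ(D_k) as minima over nonempty proper subsets of D_k
    (hval hvalh : Fin K → ℝ)
    (hval_le : ∀ k : Fin K, ∀ I ⊆ D k, I.Nonempty → I ≠ D k →
      hval k ≤ (∑ i ∈ I, ∑ j ∈ D k \ I, A i j)
        / min (∑ i ∈ I, deg k i) (∑ j ∈ D k \ I, deg k j))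
    (hval_attained : ∀ k : Fin K, ∃ I, I ⊆ D k ∧ I.Nonempty ∧ I ≠ D k ∧
      hval k = (∑ i ∈ I, ∑ j ∈ D k \ I, A i j)
        / min (∑ i ∈ I, deg k i) (∑ j ∈ D k \ I, deg k j))
    (hvalh_le : ∀ k : Fin K, ∀ I ⊆ D k, I.Nonempty → I ≠ D k →
      hvalh k ≤ (∑ i ∈ I, ∑ j ∈ D k \ I, Ah i j)
        / min (∑ i ∈ I, degh k i) (∑ j ∈ D k \ I, degh k j))
    (hvalh_attained : ∀ k : Fin K, ∃ I, I ⊆ D k ∧ I.Nonempty ∧ I ≠ D k ∧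
      hvalh k = (∑ i ∈ I, ∑ j ∈ D k \ I, Ah i j)
        / min (∑ i ∈ I, degh k i) (∑ j ∈ D k \ I, degh k j))
    -- Assumption 1: h(D_k)²/2 ≥ δ
    (δ : ℝ) (hδ : 0 < δ)
    (hassump : ∀ k : Fin K, δ ≤ (hval k) ^ 2 / 2) :
    ∀ k : Fin K, (hvalh k) ^ 2 / 2 ≥ δ - (5 * (M : ℝ) ^ 3 * c / (8 * m ^ 3)) * ε := by
  -- basic constants
  have hsqrt : 0 < Real.sqrt (Real.exp 1) := Real.sqrt_pos.2 (Real.exp_pos 1)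
  have hcpos : 0 < c := by rw [hc]; positivity
  have hmpos : 0 < m := by
    by_contra h
    push_neg at h
    have : m / (2 * c) ≤ 0 := div_nonpos_of_nonpos_of_nonneg h (by positivity)
    linarith
  have hcε : c * ε < m / 2 := by
    rw [lt_div_iff₀ (by positivity : (0:ℝ) < 2 * c)] at hεlt
    linarith
  have hcε0 : 0 < c * ε := by positivity
  have hm1 : m ≤ 1 := by
    obtain ⟨k, i, hi, j, hj, hij, hm⟩ := hm_attained
    rw [hm, hA, if_neg hij]
    apply Real.exp_le_one_iff.2
    apply div_nonpos_of_nonpos_of_nonneg _ (by positivity)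
    nlinarith [sq_nonneg (d i j)]
  have hM2 : (2:ℝ) ≤ (M:ℝ) := by exact_mod_cast hM
  -- entrywise facts
  have hA0 : ∀ i j, 0 ≤ A i j := by
    intro i j; rw [hA]; split_ifs
    exacts [le_rfl, (Real.exp_pos _).le]
  have hAh0 : ∀ i j, 0 ≤ Ah i j := by
    intro i j; rw [hAh]; split_ifs
    exacts [le_rfl, (Real.exp_pos _).le]
  have hAsymm : ∀ i j, A i j = A j i := by
    intro i j; rw [hA, hA, hdsymm]
    rcases eq_or_ne i j with h | h
    · rw [h]
    · rw [if_neg h, if_neg (Ne.symm h)]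
  have hAhsymm : ∀ i j, Ah i j = Ah j i := by
    intro i j; rw [hAh, hAh, hdhsymm]
    rcases eq_or_ne i j with h | h
    · rw [h]
    · rw [if_neg h, if_neg (Ne.symm h)]
  have hAd : ∀ i j, i ≠ j → |A i j - Ah i j| ≤ c * ε := by
    intro i j hij
    rw [hA, hAh, if_neg hij, if_neg hij]
    calc |Real.exp (-(d i j) ^ 2 / (2 * σa ^ 2)) - Real.exp (-(dh i j) ^ 2 / (2 * σa ^ 2))|
        ≤ 1 / (σa * Real.sqrt (Real.exp 1)) * |d i j - dh i j| := gauss_lip σa hσa _ _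
      _ ≤ c * ε := by
          rw [← hc]
          have h1 : |d i j - dh i j| ≤ ε := by
            rw [abs_sub_comm]; exact (hclose i j hij).le
          exact mul_le_mul_of_nonneg_left h1 hcpos.le
  -- main part
  intro k
  obtain ⟨I, hIsub, hIne, hIneq, hIh⟩ := hvalh_attained k
  have h_le : hval k ≤ (∑ i ∈ I, ∑ j ∈ D k \ I, A i j)
      / min (∑ i ∈ I, deg k i) (∑ j ∈ D k \ I, deg k j) := hval_le k I hIsub hIne hIneq
  set J : Finset (Fin M) := D k \ I with hJdef
  have hJsub : J ⊆ D k := Finset.sdiff_subset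
  have hJne : J.Nonempty := by
    rw [hJdef, Finset.sdiff_nonempty]
    intro h
    exact hIneq (Finset.Subset.antisymm hIsub h)
  have hdisjIJ : ∀ i ∈ I, ∀ j ∈ J, i ≠ j := by
    intro i hi j hj
    rintro rfl
    exact (Finset.mem_sdiff.1 hj).2 hi
  -- cardinalities
  set a : ℝ := (I.card : ℝ) with ha
  set b : ℝ := (J.card : ℝ) with hb
  set Mk : ℝ := ((D k).card : ℝ) with hMkdef
  have ha1 : 1 ≤ a := by
    rw [ha]
    exact_mod_cast Finset.card_pos.2 hIne
  have hb1 : 1 ≤ b := by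
    rw [hb]
    exact_mod_cast Finset.card_pos.2 hJne
  have hab : a + b = Mk := by
    have h := Finset.card_sdiff_add_card_eq_card hIsub
    rw [ha, hb, hMkdef, hJdef]
    exact_mod_cast by omega
  have hMk2 : 2 ≤ Mk := by
    rw [hMkdef]; exact_mod_cast hDcard k
  have hMkM : Mk ≤ (M:ℝ) := by
    rw [hMkdef]
    have h1 : (D k).card ≤ M := by
      simpa using Finset.card_le_univ (D k)
    exact_mod_cast h1
  have hMk1 : (0:ℝ) < Mk - 1 := by linarith only [hMk2]
  -- row bounds
  have row_lb : ∀ (B : Fin M → Fin M → ℝ) (μ : ℝ),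
      (∀ i j, 0 ≤ B i j) → (∀ i ∈ D k, ∀ j ∈ D k, i ≠ j → μ ≤ B i j) →
      ∀ i ∈ D k, μ * (Mk - 1) ≤ ∑ j ∈ D k, B i j := by
    intro B μ hB0 hBlb i hi
    have h1 : ∑ j ∈ (D k).erase i, B i j ≤ ∑ j ∈ D k, B i j := by
      apply Finset.sum_le_sum_of_subset_of_nonneg (Finset.erase_subset _ _)
      intro j _ _; exact hB0 i j
    have h2 : ((D k).erase i).card • μ ≤ ∑ j ∈ (D k).erase i, B i j := by
      apply Finset.card_nsmul_le_sum
      intro j hj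
      exact hBlb i hi j (Finset.mem_of_mem_erase hj) (Ne.symm (Finset.ne_of_mem_erase hj))
    have h3 : (((D k).erase i).card : ℝ) = Mk - 1 := by
      rw [Finset.card_erase_of_mem hi, hMkdef]
      have h4 : 1 ≤ (D k).card := Finset.card_pos.2 ⟨i, hi⟩
      push_cast [Nat.cast_sub h4]
      ring
    rw [nsmul_eq_mul, h3] at h2
    have : μ * (Mk - 1) = (Mk - 1) * μ := mul_comm _ _
    linarith only [h1, h2, this]
  have row_dist : ∀ i ∈ D k, ∑ j ∈ D k, |A i j - Ah i j| ≤ (Mk - 1) * (c * ε) := by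
    intro i hi
    have h0 : ∑ j ∈ D k, |A i j - Ah i j|
        = |A i i - Ah i i| + ∑ j ∈ (D k).erase i, |A i j - Ah i j| :=
      (Finset.add_sum_erase (D k) (fun j => |A i j - Ah i j|) hi).symm
    have hdiag : |A i i - Ah i i| = 0 := by
      rw [hA, hAh, if_pos rfl, if_pos rfl, sub_zero, abs_zero]
    have h3 : (((D k).erase i).card : ℝ) = Mk - 1 := by
      rw [Finset.card_erase_of_mem hi, hMkdef]
      have h4 : 1 ≤ (D k).card := Finset.card_pos.2 ⟨i, hi⟩
      push_cast [Nat.cast_sub h4]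
      ring
    rw [h0, hdiag, zero_add]
    calc ∑ j ∈ (D k).erase i, |A i j - Ah i j|
        ≤ ∑ _j ∈ (D k).erase i, (c * ε) := by
          apply Finset.sum_le_sum
          intro j hj
          exact hAd i j (Ne.symm (Finset.ne_of_mem_erase hj))
      _ = (Mk - 1) * (c * ε) := by
          rw [Finset.sum_const, nsmul_eq_mul, h3]
  -- volume lower bounds
  have sum_lb : ∀ (S : Finset (Fin M)), S ⊆ D k →
      ∀ (dg : Fin M → ℝ) (B : Fin M → Fin M → ℝ) (μ : ℝ),
      (∀ i, dg i = ∑ j ∈ D k, B i j) → (∀ i j, 0 ≤ B i j) →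
      (∀ i ∈ D k, ∀ j ∈ D k, i ≠ j → μ ≤ B i j) →
      μ * (Mk - 1) * (S.card : ℝ) ≤ ∑ i ∈ S, dg i := by
    intro S hS dg B μ hdg hB0 hBlb
    calc μ * (Mk - 1) * (S.card : ℝ) = ∑ _i ∈ S, μ * (Mk - 1) := by
          rw [Finset.sum_const, nsmul_eq_mul]; ring
      _ ≤ ∑ i ∈ S, dg i := by
          apply Finset.sum_le_sum
          intro i hi
          rw [hdg i]
          exact row_lb B μ hB0 hBlb i (hS hi)
  have hAhlb : ∀ i ∈ D k, ∀ j ∈ D k, i ≠ j → m / 2 ≤ Ah i j := by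
    intro i hi j hj hij
    have h1 := hAd i j hij
    have h2 := hm_le k i hi j hj hij
    have h3 := abs_le.1 h1
    linarith only [h2, h3.2, hcε]
  have vI_lb : m * (Mk - 1) * a ≤ ∑ i ∈ I, deg k i :=
    sum_lb I hIsub _ A m (hdeg k) hA0 (hm_le k)
  have vJ_lb : m * (Mk - 1) * b ≤ ∑ j ∈ J, deg k j :=
    sum_lb J hJsub _ A m (hdeg k) hA0 (hm_le k)
  have vhI_lb : m / 2 * (Mk - 1) * a ≤ ∑ i ∈ I, degh k i :=
    sum_lb I hIsub _ Ah (m/2) (hdegh k) hAh0 hAhlb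
  have vhJ_lb : m / 2 * (Mk - 1) * b ≤ ∑ j ∈ J, degh k j :=
    sum_lb J hJsub _ Ah (m/2) (hdegh k) hAh0 hAhlb
  -- volume perturbations
  have sum_diff : ∀ (S : Finset (Fin M)), S ⊆ D k →
      |(∑ i ∈ S, deg k i) - ∑ i ∈ S, degh k i| ≤ (Mk - 1) * (c * ε) * (S.card : ℝ) := by
    intro S hS
    rw [← Finset.sum_sub_distrib]
    calc |∑ i ∈ S, (deg k i - degh k i)| ≤ ∑ i ∈ S, |deg k i - degh k i| :=
          Finset.abs_sum_le_sum_abs _ _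
      _ ≤ ∑ _i ∈ S, ((Mk - 1) * (c * ε)) := by
          apply Finset.sum_le_sum
          intro i hi
          rw [hdeg, hdegh, ← Finset.sum_sub_distrib]
          calc |∑ j ∈ D k, (A i j - Ah i j)| ≤ ∑ j ∈ D k, |A i j - Ah i j| :=
                Finset.abs_sum_le_sum_abs _ _
            _ ≤ (Mk - 1) * (c * ε) := row_dist i (hS hi)
      _ = (Mk - 1) * (c * ε) * (S.card : ℝ) := by
          rw [Finset.sum_const, nsmul_eq_mul]; ring
  have n_diff : |(∑ i ∈ I, ∑ j ∈ J, A i j) - ∑ i ∈ I, ∑ j ∈ J, Ah i j|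
      ≤ c * ε * (a * b) := by
    rw [← Finset.sum_sub_distrib]
    calc |∑ i ∈ I, (∑ j ∈ J, A i j - ∑ j ∈ J, Ah i j)|
        ≤ ∑ i ∈ I, |∑ j ∈ J, A i j - ∑ j ∈ J, Ah i j| := Finset.abs_sum_le_sum_abs _ _
      _ ≤ ∑ _i ∈ I, (c * ε * b) := by
          apply Finset.sum_le_sum
          intro i hi
          rw [← Finset.sum_sub_distrib]
          calc |∑ j ∈ J, (A i j - Ah i j)| ≤ ∑ j ∈ J, |A i j - Ah i j| :=
                Finset.abs_sum_le_sum_abs _ _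
            _ ≤ ∑ _j ∈ J, (c * ε) := by
                apply Finset.sum_le_sum
                intro j hj
                exact hAd i j (hdisjIJ i hi j hj)
            _ = c * ε * b := by rw [Finset.sum_const, nsmul_eq_mul, hb]; ring
      _ = c * ε * (a * b) := by rw [Finset.sum_const, nsmul_eq_mul, ha]; ring
  have n0 : 0 ≤ ∑ i ∈ I, ∑ j ∈ J, A i j :=
    Finset.sum_nonneg fun i _ => Finset.sum_nonneg fun j _ => hA0 i j
  have nh0 : 0 ≤ ∑ i ∈ I, ∑ j ∈ J, Ah i j :=
    Finset.sum_nonneg fun i _ => Finset.sum_nonneg fun j _ => hAh0 i j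
  -- cut ≤ volumes
  have cut_le : ∀ (B : Fin M → Fin M → ℝ), (∀ i j, 0 ≤ B i j) → (∀ i j, B i j = B j i) →
      ∀ (dg : Fin M → ℝ), (∀ i, dg i = ∑ j ∈ D k, B i j) →
      (∑ i ∈ I, ∑ j ∈ J, B i j ≤ ∑ i ∈ I, dg i ∧
        ∑ i ∈ I, ∑ j ∈ J, B i j ≤ ∑ j ∈ J, dg j) := by
    intro B hB0 hBsymm dg hdg
    constructor
    · apply Finset.sum_le_sum
      intro i _
      rw [hdg]
      apply Finset.sum_le_sum_of_subset_of_nonneg hJsub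
      intro j _ _; exact hB0 i j
    · rw [Finset.sum_comm]
      apply Finset.sum_le_sum
      intro j _
      rw [hdg]
      calc ∑ i ∈ I, B i j = ∑ i ∈ I, B j i := by
            apply Finset.sum_congr rfl; intro i _; rw [hBsymm]
        _ ≤ ∑ i ∈ D k, B j i := by
            apply Finset.sum_le_sum_of_subset_of_nonneg hIsub
            intro i _ _; exact hB0 j i
  obtain ⟨n_le_vI, n_le_vJ⟩ := cut_le A hA0 hAsymm (deg k) (hdeg k)
  obtain ⟨nh_le_vhI, nh_le_vhJ⟩ := cut_le Ah hAh0 hAhsymm (degh k) (hdegh k)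
  -- set up min/max of a, b
  set t : ℝ := min a b with htdef
  set T : ℝ := max a b with hTdef
  have ht1 : 1 ≤ t := le_min ha1 hb1
  have htT : t ≤ T := min_le_max
  have htT2 : t + T = Mk := by rw [htdef, hTdef, min_add_max]; exact hab
  have htTab : t * T = a * b := by rw [htdef, hTdef, min_mul_max]
  have hta : t ≤ a := min_le_left _ _
  have htb : t ≤ b := min_le_right _ _
  have haT : a ≤ T := le_max_left _ _
  have hbT : b ≤ T := le_max_right _ _
  have hmono : ∀ x y z : ℝ, 0 ≤ z → x ≤ y → z * x ≤ z * y :=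
    fun x y z hz hxy => mul_le_mul_of_nonneg_left hxy hz
  -- apply the abstract perturbation bound
  have hMk10 : (0:ℝ) ≤ m * (Mk - 1) := by positivity
  have hMk10' : (0:ℝ) ≤ m / 2 * (Mk - 1) := by positivity
  have hMkcε : (0:ℝ) ≤ (Mk - 1) * (c * ε) := by positivity
  have arg1 : m * (Mk - 1) * t ≤ ∑ i ∈ I, deg k i :=
    le_trans (mul_le_mul_of_nonneg_left hta hMk10) vI_lb
  have arg2 : m * (Mk - 1) * t ≤ ∑ j ∈ J, deg k j :=
    le_trans (mul_le_mul_of_nonneg_left htb hMk10) vJ_lb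
  have arg3 : m / 2 * (Mk - 1) * t ≤ ∑ i ∈ I, degh k i :=
    le_trans (mul_le_mul_of_nonneg_left hta hMk10') vhI_lb
  have arg4 : m / 2 * (Mk - 1) * t ≤ ∑ j ∈ J, degh k j :=
    le_trans (mul_le_mul_of_nonneg_left htb hMk10') vhJ_lb
  have arg5 : |(∑ i ∈ I, ∑ j ∈ J, A i j) - ∑ i ∈ I, ∑ j ∈ J, Ah i j|
      ≤ c * ε * (t * T) := by
    rw [htTab]; exact n_diff
  have sdI := sum_diff I hIsub
  rw [← ha] at sdI
  have arg6 : |(∑ i ∈ I, deg k i) - ∑ i ∈ I, degh k i| ≤ (Mk - 1) * (c * ε) * T := by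
    refine sdI.trans ?_
    exact mul_le_mul_of_nonneg_left haT hMkcε
  have sdJ := sum_diff J hJsub
  rw [← hb] at sdJ
  have arg7 : |(∑ j ∈ J, deg k j) - ∑ j ∈ J, degh k j| ≤ (Mk - 1) * (c * ε) * T := by
    refine sdJ.trans ?_
    exact mul_le_mul_of_nonneg_left hbT hMkcε
  have key : hval k - hvalh k ≤ c * ε * (M:ℝ) / m := by
    have main := ratio_pert (∑ i ∈ I, ∑ j ∈ J, A i j) (∑ i ∈ I, ∑ j ∈ J, Ah i j)
      (∑ i ∈ I, deg k i) (∑ j ∈ J, deg k j)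
      (∑ i ∈ I, degh k i) (∑ j ∈ J, degh k j)
      t T Mk (M:ℝ) m c ε hmpos hcε0 ht1 htT htT2 hMkM n0 nh0
      n_le_vI n_le_vJ nh_le_vhI nh_le_vhJ
      arg1 arg2 arg3 arg4 arg5 arg6 arg7
    rw [hIh]
    linarith only [main, h_le]
  -- positivity facts for the min-volume denominators appearing in hIh and h_le
  have s_pos : 0 < min (∑ i ∈ I, deg k i) (∑ j ∈ J, deg k j) := by
    apply lt_min
    · exact lt_of_lt_of_le (by positivity : (0:ℝ) < m * (Mk - 1) * a) vI_lb
    · exact lt_of_lt_of_le (by positivity : (0:ℝ) < m * (Mk - 1) * b) vJ_lb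
  have sh_pos : 0 < min (∑ i ∈ I, degh k i) (∑ j ∈ J, degh k j) := by
    apply lt_min
    · exact lt_of_lt_of_le (by positivity : (0:ℝ) < m / 2 * (Mk - 1) * a) vhI_lb
    · exact lt_of_lt_of_le (by positivity : (0:ℝ) < m / 2 * (Mk - 1) * b) vhJ_lb
  have hhat0 : 0 ≤ hvalh k := by
    rw [hIh]
    exact div_nonneg nh0 sh_pos.le
  have hhat1 : hvalh k ≤ 1 := by
    rw [hIh, div_le_one sh_pos]
    exact le_min nh_le_vhI nh_le_vhJ
  have h_le1 : hval k ≤ 1 := by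
    refine h_le.trans ?_
    rw [div_le_one s_pos]
    exact le_min n_le_vI n_le_vJ
  have h0 : 0 ≤ hval k := by
    obtain ⟨I', hI'sub, _, _, hI'⟩ := hval_attained k
    rw [hI']
    apply div_nonneg
    · exact Finset.sum_nonneg fun i _ => Finset.sum_nonneg fun j _ => hA0 i j
    · apply le_min
      · exact Finset.sum_nonneg fun i _ => by
          rw [hdeg]; exact Finset.sum_nonneg fun j _ => hA0 i j
      · exact Finset.sum_nonneg fun i _ => by
          rw [hdeg]; exact Finset.sum_nonneg fun j _ => hA0 i j
  -- conclude
  have hA5pos : 0 ≤ 5 * (M:ℝ) ^ 3 * c / (8 * m ^ 3) * ε := by positivity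
  have hA5eq : 5 * (M:ℝ) ^ 3 * c / (8 * m ^ 3) * ε = 5 * (M:ℝ) ^ 3 * c * ε / (8 * m ^ 3) := by
    ring
  rcases le_or_gt (hval k) (hvalh k) with hcase | hcase
  · have hpow : hval k ^ 2 ≤ hvalh k ^ 2 := pow_le_pow_left₀ h0 hcase 2
    linarith only [hpow, hassump k, hA5pos]
  · have hd2 : hval k ^ 2 - hvalh k ^ 2 ≤ 2 * (c * ε * (M:ℝ) / m) := by
      have hsum : hval k + hvalh k ≤ 2 := by linarith only [h_le1, hhat1]
      have hsum0 : 0 ≤ hval k + hvalh k := by linarith only [h0, hhat0]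
      have hrhs0 : 0 ≤ c * ε * (M:ℝ) / m := by positivity
      have hp := mul_le_mul key hsum hsum0 hrhs0
      have he : hval k ^ 2 - hvalh k ^ 2
          = (hval k - hvalh k) * (hval k + hvalh k) := by ring
      linarith only [hp, he]
    have hm2 : m ^ 2 ≤ 1 := by nlinarith only [hm1, hmpos]
    have h8 : 8 * m ^ 2 ≤ 5 * (M:ℝ) ^ 2 := by nlinarith only [hm2, hM2]
    have hfin2 : c * ε * (M:ℝ) / m ≤ 5 * (M:ℝ) ^ 3 * c * ε / (8 * m ^ 3) := by
      rw [div_le_div_iff₀ hmpos (by positivity : (0:ℝ) < 8 * m ^ 3)]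
      have hint := mul_le_mul_of_nonneg_left h8
        (show (0:ℝ) ≤ c * ε * (M:ℝ) * m by positivity)
      nlinarith only [hint]
    linarith only [hassump k, hd2, hfin2, hA5eq]
end

section
/- Under the shared clustering-perturbation setup, suppose additionally that there is ε₁ > 0 such that for all k₁, k₂ ∈ [K] with k₁ ≠ k₂, Σ_{i∈D_{k₁}} Σ_{j∈D_{k₂}} A_{ij}²/(d_i^{(k₁)}·d_j^{(k₂)}) ≤ ε₁. Then for all k₁ ≠ k₂, Σ_{i∈D_{k₁}} Σ_{j∈D_{k₂}} Â_{ij}²/(d̂_i^{(k₁)}·d̂_j^{(k₂)}) ≤ ε₁ + A₆·ε, where A₆ = 24c/m⁴. -/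
open Real

set_option maxHeartbeats 1000000

lemma exp_le_inv_one_sub {x : ℝ} (h : x < 1) : Real.exp x ≤ (1 - x)⁻¹ := by
  rw [le_inv_comm₀ (Real.exp_pos x) (by linarith)]
  calc (1-x) ≤ Real.exp (-x) := by linarith [Real.add_one_le_exp (-x)]
    _ = (Real.exp x)⁻¹ := Real.exp_neg x

lemma sqrt_e_lt : Real.sqrt (Real.exp 1) < 1.6487213 := by
  rw [show (1.6487213:ℝ) = Real.sqrt (1.6487213^2) by rw [Real.sqrt_sq]; norm_num]
  apply Real.sqrt_lt_sqrt (Real.exp_pos 1).le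
  nlinarith [Real.exp_one_lt_d9]

lemma sqrt_e_gt : (1.6487212:ℝ) < Real.sqrt (Real.exp 1) := by
  rw [show (1.6487212:ℝ) = Real.sqrt (1.6487212^2) by rw [Real.sqrt_sq]; norm_num]
  apply Real.sqrt_lt_sqrt (by norm_num)
  nlinarith [Real.exp_one_gt_d9]

lemma fineq (m : ℝ) (h0 : 0 ≤ m) (h1 : m ≤ 1) :
    2.983*m ≤ (1 - (1-m)*(0.5569706+0.9691509*m)/2)^2*(m+3-0.6795706*m^3-0.2265235*m^4) := by
  nlinarith [sq_nonneg (m-1), sq_nonneg m, mul_nonneg h0 h0, sq_nonneg (m*(1-m)), sq_nonneg (m-0.5), mul_nonneg (mul_nonneg h0 h0) h0, sq_nonneg (m^2-m), sq_nonneg (m^2*(1-m)), mul_nonneg (mul_nonneg (mul_nonneg h0 h0) h0) h0]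

lemma E1_bound : Real.exp (Real.sqrt (Real.exp 1)/4 + Real.exp 1/4) ≤ 2.983 := by
  have h1 : Real.sqrt (Real.exp 1)/4 + Real.exp 1/4 ≤ 1.09175079 := by
    have h := sqrt_e_lt; have h2 := Real.exp_one_lt_d9; norm_num at h h2 ⊢; linarith
  calc Real.exp (Real.sqrt (Real.exp 1)/4 + Real.exp 1/4) ≤ Real.exp 1.09175079 :=
        Real.exp_le_exp.2 h1
    _ = Real.exp 1 * (Real.exp 0.0229376975)^4 := by
        rw [← Real.exp_nat_mul, ← Real.exp_add]; norm_num
    _ ≤ 2.7182818286 * ((1 - 0.0229376975 : ℝ)⁻¹)^4 := by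
        have h2 : Real.exp 0.0229376975 ≤ (1-0.0229376975:ℝ)⁻¹ :=
          exp_le_inv_one_sub (by norm_num)
        have h3 := Real.exp_one_lt_d9
        have h4 : (0:ℝ) < Real.exp 0.0229376975 := Real.exp_pos _
        gcongr <;> first | positivity | linarith
    _ ≤ 2.983 := by norm_num

lemma core (m : ℝ) (hm0 : 0 < m) (hm1 : m ≤ 1) :
    Real.exp (Real.sqrt (Real.exp 1) * m * Real.sqrt (1/m - m)
        + Real.sqrt (Real.exp 1)^2/4 * m^2)
      + Real.sqrt (Real.exp 1)^2/4 * m^2 + Real.sqrt (Real.exp 1)^2/12 * m^3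
      ≤ 1 + 3/m := by
  have hu0 : (0:ℝ) < Real.sqrt (Real.exp 1) := Real.sqrt_pos.2 (Real.exp_pos 1)
  have hu2 : Real.sqrt (Real.exp 1)^2 = Real.exp 1 := Real.sq_sqrt (Real.exp_pos 1).le
  have hmQ : 0 ≤ 1/m - m := by
    have h : (1:ℝ) ≤ 1/m := one_le_one_div hm0 hm1
    linarith
  have hQ0 : 0 ≤ Real.sqrt (1/m - m) := Real.sqrt_nonneg _
  have hQ2 : Real.sqrt (1/m - m)^2 = 1/m - m := Real.sq_sqrt hmQ
  -- make opaque variables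
  obtain ⟨u, hu⟩ : ∃ u, u = Real.sqrt (Real.exp 1) := ⟨_, rfl⟩
  obtain ⟨Q, hQ⟩ : ∃ Q, Q = Real.sqrt (1/m - m) := ⟨_, rfl⟩
  rw [← hu] at hu0 hu2 ⊢
  rw [← hQ] at hQ0 hQ2 ⊢
  have hulo : (1.6487212:ℝ) < u := by rw [hu]; exact sqrt_e_gt
  have huhi : u < 1.6487213 := by rw [hu]; exact sqrt_e_lt
  have hmQ2 : m * Q^2 = 1 - m^2 := by rw [hQ2]; field_simp
  have hamgm : u*m*Q ≤ u/4*m + u*(1-m^2) := by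
    have h1 : (u*m*Q)^2 = u^2*m*(1-m^2) := by
      calc (u*m*Q)^2 = u^2*m*(m*Q^2) := by ring
        _ = u^2*m*(1-m^2) := by rw [hmQ2]
    have h2 : 0 ≤ u*m*Q := by positivity
    have h3 : 0 ≤ u/4*m + u*(1-m^2) := by nlinarith
    nlinarith [sq_nonneg (u/4*m - u*(1-m^2)), h1, h2, h3]
  obtain ⟨Z, hZdef⟩ : ∃ Z, Z = (1-m)*((3*u-u^2)/4 + (u-u^2/4)*m) := ⟨_, rfl⟩
  have hYZ : u/4*m + u*(1-m^2) + u^2/4*m^2 = (u/4 + u^2/4) + Z := by rw [hZdef]; ring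
  have hu0' : (0:ℝ) < u := by linarith
  have hA0 : (0:ℝ) ≤ (3*u-u^2)/4 := by nlinarith
  have hB0 : (0:ℝ) ≤ u-u^2/4 := by nlinarith
  have hZ0 : 0 ≤ Z := by
    rw [hZdef]
    apply mul_nonneg (by linarith)
    nlinarith [mul_nonneg hB0 hm0.le]
  have hZ2 : Z/2 < 1 := by
    rw [hZdef]
    nlinarith [mul_nonneg (mul_nonneg hB0 hm0.le) (sub_nonneg.2 hm1)]
  have hwpos : 0 < 1 - Z/2 := by linarith
  have hexpY : Real.exp (u*m*Q + u^2/4*m^2) ≤ 2.983 * ((1-Z/2)⁻¹)^2 := by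
    have h1 : Real.exp (u*m*Q + u^2/4*m^2) ≤ Real.exp ((u/4 + u^2/4) + Z) := by
      apply Real.exp_le_exp.2; rw [← hYZ]; nlinarith [hamgm]
    have h2 : Real.exp ((u/4 + u^2/4) + Z) = Real.exp (u/4 + u^2/4) * (Real.exp (Z/2))^2 := by
      have hz : Real.exp Z = (Real.exp (Z/2))^2 := by
        rw [sq, ← Real.exp_add]; congr 1; ring
      rw [Real.exp_add, hz]
    have h3 : Real.exp (Z/2) ≤ (1-Z/2)⁻¹ := exp_le_inv_one_sub hZ2
    have h4 : Real.exp (u/4 + u^2/4) ≤ 2.983 := by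
      rw [hu2, hu]; exact E1_bound
    calc Real.exp (u*m*Q + u^2/4*m^2) ≤ Real.exp (u/4 + u^2/4) * (Real.exp (Z/2))^2 :=
          h2 ▸ h1
      _ ≤ 2.983 * ((1-Z/2)⁻¹)^2 := by
          have h5 := Real.exp_pos (Z/2)
          gcongr <;> first | positivity | exact (Real.exp_pos _).le
  have he_lo : (2.7182818283:ℝ) < u^2 := by rw [hu2]; nlinarith [Real.exp_one_gt_d9]
  have he_hi : u^2 < 2.7182818286 := by rw [hu2]; nlinarith [Real.exp_one_lt_d9]
  have hZub : Z ≤ (1-m)*(0.5569706+0.9691509*m) := by rw [hZdef]; nlinarith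
  have hwlb0 : 0 < 1 - (1-m)*(0.5569706+0.9691509*m)/2 := by nlinarith
  have hfac : (m+3-0.6795706*m^3-0.2265235*m^4) ≤ m+3-(u^2/4)*m^3-(u^2/12)*m^4 := by
    nlinarith [pow_nonneg hm0.le 3, pow_nonneg hm0.le 4]
  have hfacpos : (0:ℝ) < m+3-0.6795706*m^3-0.2265235*m^4 := by nlinarith
  have hP : 2.983*m ≤ (1-Z/2)^2 * (m+3-(u^2/4)*m^3-(u^2/12)*m^4) := by
    calc 2.983*m ≤ (1 - (1-m)*(0.5569706+0.9691509*m)/2)^2*(m+3-0.6795706*m^3-0.2265235*m^4) :=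
          fineq m hm0.le hm1
      _ ≤ (1-Z/2)^2 * (m+3-(u^2/4)*m^3-(u^2/12)*m^4) := by
          apply mul_le_mul (by nlinarith) hfac hfacpos.le (by positivity)
  have h6 : 2.983 ≤ (1 + 3/m - u^2/4*m^2 - u^2/12*m^3) * (1-Z/2)^2 := by
    have expand : ((1 + 3/m - u^2/4*m^2 - u^2/12*m^3) * (1-Z/2)^2) * m
        = (1-Z/2)^2*(m+3-(u^2/4)*m^3-(u^2/12)*m^4) := by
      field_simp
    have := hP
    rw [← expand] at this
    have hm' := hm0
    nlinarith [this]
  have hkey : 2.983 * ((1-Z/2)⁻¹)^2 ≤ 1 + 3/m - u^2/4*m^2 - u^2/12*m^3 := by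
    rw [inv_pow, mul_inv_le_iff₀ (by positivity)]
    exact h6
  linarith [hexpY]


lemma master (m s W X : ℝ) (hm0 : 0 < m) (hm1 : m ≤ 1) (hs0 : 0 < s)
    (hs : 2*s ≤ Real.sqrt (Real.exp 1) * m) (hW : 0 ≤ W) (hX0 : 0 ≤ X) (hXW : X ≤ W + s) :
    Real.exp (2*s*Real.sqrt (1/m - m) + s^2) * Real.exp (-W^2)
      ≤ Real.exp (-X^2) + 6*s/(Real.sqrt (Real.exp 1) * m^2) := by
  have hu0 : (0:ℝ) < Real.sqrt (Real.exp 1) := Real.sqrt_pos.2 (Real.exp_pos 1)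
  have hmQ : 0 ≤ 1/m - m := by
    have h : (1:ℝ) ≤ 1/m := one_le_one_div hm0 hm1
    linarith
  have hQ0 : 0 ≤ Real.sqrt (1/m - m) := Real.sqrt_nonneg _
  have hcore := core m hm0 hm1
  obtain ⟨u, hu⟩ : ∃ u, u = Real.sqrt (Real.exp 1) := ⟨_, rfl⟩
  obtain ⟨Q, hQ⟩ : ∃ Q, Q = Real.sqrt (1/m - m) := ⟨_, rfl⟩
  rw [← hu] at hu0 hs ⊢
  rw [← hQ] at hQ0 ⊢
  rw [← hu, ← hQ] at hcore
  set K : ℝ := 6/(u*m^2) with hK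
  have hK0 : 0 < K := by rw [hK]; positivity
  have hKs : 6*s/(u*m^2) = K*s := by rw [hK]; ring
  rw [hKs]
  set G : ℝ := Real.exp (2*s*Q + s^2) with hG
  have hE0 : 0 < Real.exp (-W^2) := Real.exp_pos _
  -- step 1
  have h1 : Real.exp (-W^2) * (1 - (2*W*s + s^2)) ≤ Real.exp (-X^2) := by
    have e1 : Real.exp (-(W+s)^2) ≤ Real.exp (-X^2) := by
      apply Real.exp_le_exp.2
      have hsq : X^2 ≤ (W+s)^2 := pow_le_pow_left₀ hX0 hXW 2
      linarith
    have e2 : Real.exp (-(W+s)^2) = Real.exp (-W^2) * Real.exp (-(2*W*s+s^2)) := by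
      rw [← Real.exp_add]; congr 1; ring
    have e3 : 1 - (2*W*s+s^2) ≤ Real.exp (-(2*W*s+s^2)) := by
      linarith [Real.add_one_le_exp (-(2*W*s+s^2))]
    calc Real.exp (-W^2) * (1 - (2*W*s + s^2)) ≤ Real.exp (-W^2) * Real.exp (-(2*W*s+s^2)) :=
          mul_le_mul_of_nonneg_left e3 hE0.le
      _ = Real.exp (-(W+s)^2) := e2.symm
      _ ≤ Real.exp (-X^2) := e1
  have hG1 : 1 ≤ G := by
    rw [hG, show (1:ℝ) = Real.exp 0 by simp]
    apply Real.exp_le_exp.2; positivity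
  have h2 : Real.exp (-W^2) ≤ (1+W^2)⁻¹ := by
    rw [Real.exp_neg]
    apply inv_anti₀ (by positivity)
    linarith [Real.add_one_le_exp (W^2)]
  have hws : 0 ≤ 2*W*s + s^2 := by positivity
  have hnum : 0 ≤ G - 1 + (2*W*s + s^2) := by linarith
  have h3 : G * Real.exp (-W^2) - Real.exp (-X^2) ≤ (G - 1 + (2*W*s+s^2)) * (1+W^2)⁻¹ := by
    have expand : Real.exp (-W^2) * (G - 1 + (2*W*s+s^2))
        = G*Real.exp (-W^2) - Real.exp (-W^2)*(1 - (2*W*s+s^2)) := by ring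
    have step : G * Real.exp (-W^2) - Real.exp (-X^2) ≤ Real.exp (-W^2) * (G - 1 + (2*W*s+s^2)) := by
      rw [expand]; linarith
    calc G * Real.exp (-W^2) - Real.exp (-X^2) ≤ Real.exp (-W^2) * (G - 1 + (2*W*s+s^2)) := step
      _ ≤ (1+W^2)⁻¹ * (G - 1 + (2*W*s+s^2)) := mul_le_mul_of_nonneg_right h2 hnum
      _ = (G - 1 + (2*W*s+s^2)) * (1+W^2)⁻¹ := by ring
  -- step 3: quadratic in W
  have h4 : 2*W*s - K*s*W^2 ≤ s/K := by
    have e : 0 ≤ s * ((K*W-1)^2) / K := by positivity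
    have expand : s * ((K*W-1)^2) / K = K*s*W^2 - 2*W*s + s/K := by
      field_simp; ring
    linarith [expand ▸ e]
  -- step 4: C1
  have hC1 : G - 1 + s^2 + s/K ≤ K*s := by
    set sb : ℝ := u*m/2 with hsb
    have hsb0 : 0 < sb := by rw [hsb]; positivity
    set θ : ℝ := s/sb with hθ
    have hθ0 : 0 < θ := by positivity
    have hθ1 : θ ≤ 1 := by
      rw [hθ, div_le_one hsb0, hsb]; linarith
    have hsθ : s = θ*sb := by rw [hθ]; field_simp
    have hθ2 : θ^2 ≤ θ := by
      have h := mul_le_mul_of_nonneg_left hθ1 hθ0.le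
      calc θ^2 = θ*θ := by ring
        _ ≤ θ*1 := h
        _ = θ := by ring
    set Xb : ℝ := 2*sb*Q + sb^2 with hXb
    have hXb0 : 0 ≤ Xb := by rw [hXb]; positivity
    have hq2 : θ^2*sb^2 ≤ θ*sb^2 := mul_le_mul_of_nonneg_right hθ2 (sq_nonneg sb)
    have ha : 2*s*Q + s^2 ≤ θ*Xb := by
      calc 2*s*Q + s^2 = θ*(2*sb*Q) + θ^2*sb^2 := by rw [hsθ]; ring
        _ ≤ θ*(2*sb*Q) + θ*sb^2 := by linarith
        _ = θ*Xb := by rw [hXb]; ring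
    have hb : G ≤ Real.exp (θ*Xb) := by rw [hG]; exact Real.exp_le_exp.2 ha
    have hconv : Real.exp (θ*Xb) ≤ (1-θ) + θ * Real.exp Xb := by
      have h := convexOn_exp.2 (Set.mem_univ (0:ℝ)) (Set.mem_univ Xb)
        (by linarith : (0:ℝ) ≤ 1-θ) hθ0.le (by ring)
      simpa using h
    have hXbeq : Xb = u*m*Q + u^2/4*m^2 := by rw [hXb, hsb]; ring
    have hcore' : Real.exp Xb + u^2/4*m^2 + u^2/12*m^3 ≤ 1 + 3/m := by
      rw [hXbeq]; exact hcore
    have hsb2 : sb^2 = u^2/4*m^2 := by rw [hsb]; ring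
    have hsbK : sb/K = u^2/12*m^3 := by rw [hsb, hK]; field_simp; ring
    have hKsb : K*sb = 3/m := by rw [hsb, hK]; field_simp; ring
    have hC1' : Real.exp Xb - 1 + sb^2 + sb/K ≤ K*sb := by
      rw [hsb2, hsbK, hKsb]; linarith
    have hmul := mul_le_mul_of_nonneg_left hC1' hθ0.le
    have hs2 : s^2 ≤ θ*sb^2 := by
      calc s^2 = θ^2*sb^2 := by rw [hsθ]; ring
        _ ≤ θ*sb^2 := hq2
    have hGm1 : G - 1 ≤ θ*(Real.exp Xb - 1) := by
      calc G - 1 ≤ Real.exp (θ*Xb) - 1 := by linarith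
        _ ≤ (1-θ) + θ*Real.exp Xb - 1 := by linarith
        _ = θ*(Real.exp Xb - 1) := by ring
    have hsK : s/K = θ*(sb/K) := by rw [hsθ]; ring
    have hKs' : K*s = θ*(K*sb) := by rw [hsθ]; ring
    rw [hsK, hKs']
    linarith [hmul, hGm1, hs2]
  have h5 : G - 1 + (2*W*s+s^2) ≤ K*s*(1+W^2) := by
    have expand : K*s*(1+W^2) = K*s + K*s*W^2 := by ring
    rw [expand]; linarith [h4, hC1]
  have h6 : (G - 1 + (2*W*s+s^2)) * (1+W^2)⁻¹ ≤ K*s := by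
    rw [mul_inv_le_iff₀ (by positivity : (0:ℝ) < 1+W^2)]
    calc G - 1 + (2*W*s+s^2) ≤ K*s*(1+W^2) := h5
      _ = K*s*(1+W^2) := rfl
  linarith [h3, h6]


/-- SHARED SETUP + STATEMENT. -/
theorem intercluster_ratio_perturbation_bound
    (M K : ℕ) (hM : 2 ≤ M) (hK : 1 ≤ K)
    -- the clusters: a partition of [M] into K clusters, each of size ≥ 2
    (D : Fin K → Finset (Fin M))
    (hDdisj : ∀ k l : Fin K, k ≠ l → Disjoint (D k) (D l))
    (hDcover : ∀ i : Fin M, ∃ k : Fin K, i ∈ D k)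
    (hDcard : ∀ k : Fin K, 2 ≤ (D k).card)
    -- true and estimated distances: nonnegative, symmetric, zero diagonal
    (d dh : Fin M → Fin M → ℝ)
    (hd0 : ∀ i j, 0 ≤ d i j) (hdh0 : ∀ i j, 0 ≤ dh i j)
    (hdsymm : ∀ i j, d i j = d j i) (hdhsymm : ∀ i j, dh i j = dh j i)
    (hddiag : ∀ i, d i i = 0) (hdhdiag : ∀ i, dh i i = 0)
    -- affinity matrices
    (σa : ℝ) (hσa : 0 < σa)
    (A Ah : Fin M → Fin M → ℝ)
    (hA : ∀ i j, A i j = if i = j then 0 else Real.exp (-(d i j) ^ 2 / (2 * σa ^ 2)))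
    (hAh : ∀ i j, Ah i j = if i = j then 0 else Real.exp (-(dh i j) ^ 2 / (2 * σa ^ 2)))
    -- cluster degrees
    (deg degh : Fin K → Fin M → ℝ)
    (hdeg : ∀ k i, deg k i = ∑ j ∈ D k, A i j)
    (hdegh : ∀ k i, degh k i = ∑ j ∈ D k, Ah i j)
    -- m = min intra-cluster true affinity, c = Lipschitz constant of the kernel
    (m c : ℝ)
    (hc : c = 1 / (σa * Real.sqrt (Real.exp 1)))
    (hm_le : ∀ k : Fin K, ∀ i ∈ D k, ∀ j ∈ D k, i ≠ j → m ≤ A i j)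
    (hm_attained : ∃ k : Fin K, ∃ i ∈ D k, ∃ j ∈ D k, i ≠ j ∧ m = A i j)
    -- the estimation error event
    (ε : ℝ) (hε : 0 < ε) (hεlt : ε < m / (2 * c))
    (hclose : ∀ i j : Fin M, i ≠ j → |dh i j - d i j| < ε)
    -- Assumption 2 for the true quantities
    (ε₁ : ℝ) (hε₁ : 0 < ε₁)
    (hassump : ∀ k₁ k₂ : Fin K, k₁ ≠ k₂ →
      ∑ i ∈ D k₁, ∑ j ∈ D k₂, (A i j) ^ 2 / (deg k₁ i * deg k₂ j) ≤ ε₁) :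
    ∀ k₁ k₂ : Fin K, k₁ ≠ k₂ →
      ∑ i ∈ D k₁, ∑ j ∈ D k₂, (Ah i j) ^ 2 / (degh k₁ i * degh k₂ j)
        ≤ ε₁ + (24 * c / m ^ 4) * ε := by
  intro k₁ k₂ hk
  have hu0 : (0:ℝ) < Real.sqrt (Real.exp 1) := Real.sqrt_pos.2 (Real.exp_pos 1)
  obtain ⟨u, hu⟩ : ∃ u, u = Real.sqrt (Real.exp 1) := ⟨_, rfl⟩
  rw [← hu] at hu0
  have hc' : c = 1/(σa * u) := by rw [hc, hu]
  have hc0 : 0 < c := by rw [hc']; positivity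
  -- m facts
  have hm0 : 0 < m := by
    obtain ⟨k, i, hi, j, hj, hij, hmeq⟩ := hm_attained
    rw [hmeq, hA i j, if_neg hij]; exact Real.exp_pos _
  have hm1 : m ≤ 1 := by
    obtain ⟨k, i, hi, j, hj, hij, hmeq⟩ := hm_attained
    rw [hmeq, hA i j, if_neg hij]
    rw [show (1:ℝ) = Real.exp 0 by simp]
    apply Real.exp_le_exp.2
    have h1 : 0 ≤ (d i j)^2 := sq_nonneg _
    have h2 : (0:ℝ) < 2*σa^2 := by positivity
    exact div_nonpos_of_nonpos_of_nonneg (by linarith) h2.le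
  -- normalized epsilon
  obtain ⟨s, hsdef⟩ : ∃ s, s = ε/σa := ⟨_, rfl⟩
  have hs0 : 0 < s := by rw [hsdef]; positivity
  have hσs : σa * s = ε := by rw [hsdef]; field_simp
  have h2s : 2*s < u*m := by
    have hc2 : (0:ℝ) < 2*c := by linarith
    have h1 : ε*(2*c) < m := by
      rw [lt_div_iff₀ hc2] at hεlt; exact hεlt
    rw [hc'] at h1
    have hσu : (0:ℝ) < σa*u := by positivity
    have h1' := (mul_lt_mul_of_pos_right h1 hσu)
    have e : ε*(2*(1/(σa*u)))*(σa*u) = 2*ε := by field_simp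
    rw [e] at h1'
    rw [hsdef, show 2*(ε/σa) = (2*ε)/σa by ring, div_lt_iff₀ hσa]
    have e2 : m*(σa*u) = u*m*σa := by ring
    linarith [e2 ▸ h1']
  -- Q and R, rho
  have hmQ : 0 ≤ 1/m - m := by
    have h : (1:ℝ) ≤ 1/m := one_le_one_div hm0 hm1
    linarith
  have hQ0 : 0 ≤ Real.sqrt (1/m - m) := Real.sqrt_nonneg _
  have hQ2 : Real.sqrt (1/m - m)^2 = 1/m - m := Real.sq_sqrt hmQ
  obtain ⟨Q, hQdef⟩ : ∃ Q, Q = Real.sqrt (1/m - m) := ⟨_, rfl⟩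
  rw [← hQdef] at hQ0 hQ2
  obtain ⟨ρ, hρdef⟩ : ∃ ρ, ρ = Real.exp (-(s*Q + s^2/2)) := ⟨_, rfl⟩
  obtain ⟨R, hRdef⟩ : ∃ R, R = Real.exp (2*s*Q + s^2) := ⟨_, rfl⟩
  have hρ0 : 0 < ρ := by rw [hρdef]; exact Real.exp_pos _
  have hR0 : 0 < R := by rw [hRdef]; exact Real.exp_pos _
  have hρR : ρ^2 * R = 1 := by
    rw [hρdef, hRdef, sq, ← Real.exp_add, ← Real.exp_add]
    rw [show -(s*Q + s^2/2) + -(s*Q + s^2/2) + (2*s*Q + s^2) = 0 by ring, Real.exp_zero]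
  -- intra-cluster bound
  have hintra : ∀ k : Fin K, ∀ i ∈ D k, ∀ j ∈ D k, ρ * A i j ≤ Ah i j := by
    intro k i hi j hj
    by_cases hij : i = j
    · subst hij
      rw [hA i i, if_pos rfl, hAh i i, if_pos rfl, mul_zero]
    · rw [hA i j, if_neg hij, hAh i j, if_neg hij, hρdef, ← Real.exp_add]
      apply Real.exp_le_exp.2
      -- d i j ≤ σa * Q via sinh
      have hd : d i j ≤ σa * Q := by
        have hmle := hm_le k i hi j hj hij
        rw [hA i j, if_neg hij] at hmle
        obtain ⟨x, hxdef⟩ : ∃ x, x = (d i j)^2/(2*σa^2) := ⟨_, rfl⟩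
        have hx0 : 0 ≤ x := by rw [hxdef]; positivity
        have hmx : m ≤ Real.exp (-x) := by
          rw [hxdef, show -((d i j)^2/(2*σa^2)) = -(d i j)^2/(2*σa^2) by ring]
          exact hmle
        have hinv : Real.exp x ≤ 1/m := by
          rw [le_div_iff₀ hm0]
          calc Real.exp x * m ≤ Real.exp x * Real.exp (-x) := by
                apply mul_le_mul_of_nonneg_left hmx (Real.exp_pos _).le
            _ = 1 := by rw [← Real.exp_add]; simp
        have hsinh : x ≤ Real.sinh x := Real.self_le_sinh_iff.2 hx0
        have hsinh' : Real.sinh x = (Real.exp x - Real.exp (-x))/2 := Real.sinh_eq x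
        have hub : 2*x ≤ 1/m - m := by
          have : Real.exp x - Real.exp (-x) ≤ 1/m - m := by linarith
          linarith [hsinh' ▸ hsinh]
        have hsq : (d i j)^2 ≤ (σa*Q)^2 := by
          have e1 : (d i j)^2 = 2*σa^2*x := by rw [hxdef]; field_simp
          have e2 : (σa*Q)^2 = σa^2*(1/m-m) := by rw [mul_pow, hQ2]
          rw [e1, e2]
          have h := mul_le_mul_of_nonneg_left hub (sq_nonneg σa)
          linarith [h]
        calc d i j = Real.sqrt ((d i j)^2) := (Real.sqrt_sq (hd0 i j)).symm
          _ ≤ Real.sqrt ((σa*Q)^2) := Real.sqrt_le_sqrt hsq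
          _ = σa*Q := Real.sqrt_sq (by positivity)
      have hdh : dh i j ≤ d i j + ε := by
        have h := (abs_lt.1 (hclose i j hij)).2
        linarith
      -- conclude
      have hdh2 : (dh i j)^2 ≤ (d i j + ε)^2 :=
        pow_le_pow_left₀ (hdh0 i j) hdh 2
      have key : (dh i j)^2 ≤ (d i j)^2 + σa^2*(2*s*Q + s^2) := by
        have e1 : σa^2*(2*s*Q+s^2) = 2*(σa*s)*(σa*Q) + (σa*s)^2 := by ring
        rw [e1, hσs]
        have h2 : 2*(d i j)*ε ≤ 2*ε*(σa*Q) := by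
          have h := mul_le_mul_of_nonneg_left hd (by positivity : (0:ℝ) ≤ 2*ε)
          linarith [h]
        linarith [hdh2, h2]
      have h2σ : (0:ℝ) < 2*σa^2 := by positivity
      rw [← sub_nonneg]
      have e2 : -(dh i j)^2/(2*σa^2) - (-(s*Q + s^2/2) + -(d i j)^2/(2*σa^2))
          = ((d i j)^2 + σa^2*(2*s*Q+s^2) - (dh i j)^2)/(2*σa^2) := by
        field_simp; ring
      rw [e2]
      apply div_nonneg (by linarith) h2σ.le
  -- degree bounds
  have hdeglow : ∀ k : Fin K, ∀ i ∈ D k, ((D k).card - 1 : ℝ) * m ≤ deg k i := by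
    intro k i hi
    rw [hdeg k i]
    have hsplit : ∑ j ∈ (D k).erase i, A i j + A i i = ∑ j ∈ D k, A i j :=
      Finset.sum_erase_add _ _ hi
    have hAii : A i i = 0 := by rw [hA i i, if_pos rfl]
    have hlow : ((D k).erase i).card • m ≤ ∑ j ∈ (D k).erase i, A i j := by
      apply Finset.card_nsmul_le_sum
      intro j hj
      exact hm_le k i hi j (Finset.mem_of_mem_erase hj) (Finset.ne_of_mem_erase hj).symm
    have hcard : ((D k).erase i).card = (D k).card - 1 := Finset.card_erase_of_mem hi
    have hc2 := hDcard k
    have hcast : (((D k).card - 1 : ℕ) : ℝ) = ((D k).card : ℝ) - 1 := by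
      have : 1 ≤ (D k).card := by omega
      push_cast [Nat.cast_sub this]; ring
    rw [hcard] at hlow
    rw [nsmul_eq_mul, hcast] at hlow
    linarith
  have hdegpos : ∀ k : Fin K, ∀ i ∈ D k, 0 < deg k i := by
    intro k i hi
    have h1 := hdeglow k i hi
    have hc2 := hDcard k
    have h3 : (1:ℝ) ≤ ((D k).card : ℝ) - 1 := by
      have : (2:ℝ) ≤ ((D k).card : ℝ) := by exact_mod_cast hc2
      linarith
    have h4 := mul_le_mul_of_nonneg_right h3 hm0.le
    linarith [h4]
  have hdeghlow : ∀ k : Fin K, ∀ i ∈ D k, ρ * deg k i ≤ degh k i := by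
    intro k i hi
    rw [hdeg k i, hdegh k i, Finset.mul_sum]
    exact Finset.sum_le_sum (fun j hj => hintra k i hi j hj)
  have hdeghpos : ∀ k : Fin K, ∀ i ∈ D k, 0 < degh k i := by
    intro k i hi
    calc (0:ℝ) < ρ * deg k i := mul_pos hρ0 (hdegpos k i hi)
      _ ≤ degh k i := hdeghlow k i hi
  -- cross bound
  have hβeq : 6*s/(u*m^2) = 6*c*ε/m^2 := by
    rw [hc', hsdef]; field_simp
  have hcross : ∀ i ∈ D k₁, ∀ j ∈ D k₂, R * (Ah i j)^2 ≤ (A i j)^2 + 6*c*ε/m^2 := by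
    intro i hi j hj
    have hij : i ≠ j := by
      rintro rfl
      exact (Finset.disjoint_left.1 (hDdisj k₁ k₂ hk) hi) hj
    rw [hA i j, if_neg hij, hAh i j, if_neg hij]
    obtain ⟨X, hXdef⟩ : ∃ X, X = d i j/σa := ⟨_, rfl⟩
    obtain ⟨W, hWdef⟩ : ∃ W, W = max (X - s) 0 := ⟨_, rfl⟩
    have hX0 : 0 ≤ X := by rw [hXdef]; exact div_nonneg (hd0 i j) hσa.le
    have hW0 : 0 ≤ W := by rw [hWdef]; exact le_max_right _ _
    have hXW : X ≤ W + s := by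
      have h := le_max_left (X - s) 0
      rw [hWdef]; linarith
    have hWdh : W ≤ dh i j/σa := by
      rw [hWdef]
      apply max_le _ (div_nonneg (hdh0 i j) hσa.le)
      have h := (abs_lt.1 (hclose i j hij)).1
      have e : X - s = (d i j - ε)/σa := by rw [hXdef, hsdef]; ring
      rw [e]
      gcongr
      linarith
    have hmaster := master m s W X hm0 hm1 hs0 (by rw [← hu]; linarith [h2s]) hW0 hX0 hXW
    rw [← hu, ← hQdef] at hmaster
    have hAh2 : (Real.exp (-(dh i j)^2/(2*σa^2)))^2 ≤ Real.exp (-W^2) := by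
      rw [sq, ← Real.exp_add]
      apply Real.exp_le_exp.2
      have hW2 : W^2 ≤ (dh i j/σa)^2 := pow_le_pow_left₀ hW0 hWdh 2
      have e3 : (dh i j/σa)^2 = (dh i j)^2/σa^2 := by rw [div_pow]
      have e2 : -(dh i j)^2/(2*σa^2) + -(dh i j)^2/(2*σa^2) = -((dh i j)^2/σa^2) := by
        field_simp; ring
      rw [e2]
      rw [e3] at hW2
      linarith
    have hA2 : (Real.exp (-(d i j)^2/(2*σa^2)))^2 = Real.exp (-X^2) := by
      rw [sq, ← Real.exp_add]
      congr 1
      rw [hXdef, div_pow]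
      field_simp
      ring
    calc R * (Real.exp (-(dh i j)^2/(2*σa^2)))^2
        ≤ R * Real.exp (-W^2) := mul_le_mul_of_nonneg_left hAh2 hR0.le
      _ = Real.exp (2*s*Q + s^2) * Real.exp (-W^2) := by rw [hRdef]
      _ ≤ Real.exp (-X^2) + 6*s/(u*m^2) := hmaster
      _ = (Real.exp (-(d i j)^2/(2*σa^2)))^2 + 6*c*ε/m^2 := by rw [← hA2, hβeq]
  -- setup for summation
  obtain ⟨β, hβdef⟩ : ∃ β, β = 6*c*ε/m^2 := ⟨_, rfl⟩
  have hβ0 : 0 < β := by rw [hβdef]; positivity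
  have hn₁ : (2:ℝ) ≤ ((D k₁).card : ℝ) := by exact_mod_cast hDcard k₁
  have hn₂ : (2:ℝ) ≤ ((D k₂).card : ℝ) := by exact_mod_cast hDcard k₂
  have ha1 : (1:ℝ) ≤ ((D k₁).card : ℝ) - 1 := by linarith
  have hb1 : (1:ℝ) ≤ ((D k₂).card : ℝ) - 1 := by linarith
  obtain ⟨C, hCdef⟩ : ∃ C, C = β/((((D k₁).card:ℝ)-1)*m*(((((D k₂).card:ℝ))-1)*m)) := ⟨_, rfl⟩
  have hC0 : 0 < C := by
    rw [hCdef]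
    apply div_pos hβ0
    have h1 : (0:ℝ) < (((D k₁).card:ℝ)-1)*m := mul_pos (by linarith) hm0
    have h2 : (0:ℝ) < (((D k₂).card:ℝ)-1)*m := mul_pos (by linarith) hm0
    exact mul_pos h1 h2
  -- per-term bound
  have hterm : ∀ i ∈ D k₁, ∀ j ∈ D k₂,
      (Ah i j)^2/(degh k₁ i * degh k₂ j)
        ≤ (A i j)^2/(deg k₁ i * deg k₂ j) + C := by
    intro i hi j hj
    have hd₁ := hdegpos k₁ i hi
    have hd₂ := hdegpos k₂ j hj
    have hdh₁ := hdeghpos k₁ i hi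
    have hdh₂ := hdeghpos k₂ j hj
    have hlow : ρ^2*(deg k₁ i * deg k₂ j) ≤ degh k₁ i * degh k₂ j := by
      have h1 := hdeghlow k₁ i hi
      have h2 := hdeghlow k₂ j hj
      calc ρ^2*(deg k₁ i*deg k₂ j) = (ρ*deg k₁ i)*(ρ*deg k₂ j) := by ring
        _ ≤ degh k₁ i * degh k₂ j :=
            mul_le_mul h1 h2 (by positivity) hdh₁.le
    have hAh0 : 0 ≤ (Ah i j)^2 := sq_nonneg _
    have step1 : (Ah i j)^2/(degh k₁ i * degh k₂ j) ≤ (Ah i j)^2/(ρ^2*(deg k₁ i * deg k₂ j)) := by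
      gcongr
    have step2 : (Ah i j)^2/(ρ^2*(deg k₁ i * deg k₂ j)) = (R*(Ah i j)^2)/(deg k₁ i * deg k₂ j) := by
      have hρ2 : ρ^2 = 1/R := by
        rw [eq_div_iff (ne_of_gt hR0)]; linarith [hρR]
      rw [hρ2]
      have hPne : (deg k₁ i * deg k₂ j) ≠ 0 := ne_of_gt (mul_pos hd₁ hd₂)
      have hRne : R ≠ 0 := ne_of_gt hR0
      field_simp
      try ring
    have step3 : (R*(Ah i j)^2)/(deg k₁ i*deg k₂ j) ≤ ((A i j)^2 + β)/(deg k₁ i*deg k₂ j) := by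
      have h := hcross i hi j hj
      rw [← hβdef] at h
      have hP := mul_pos hd₁ hd₂
      gcongr
    have step4 : ((A i j)^2+β)/(deg k₁ i*deg k₂ j)
        = (A i j)^2/(deg k₁ i*deg k₂ j) + β/(deg k₁ i*deg k₂ j) := add_div _ _ _
    have step5 : β/(deg k₁ i*deg k₂ j) ≤ C := by
      rw [hCdef]
      have h1 : (0:ℝ) < (((D k₁).card:ℝ)-1)*m := mul_pos (by linarith) hm0
      have h2 : (0:ℝ) < (((D k₂).card:ℝ)-1)*m := mul_pos (by linarith) hm0
      have hprod : (((D k₁).card:ℝ)-1)*m*(((((D k₂).card:ℝ))-1)*m) ≤ deg k₁ i * deg k₂ j :=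
        mul_le_mul (hdeglow k₁ i hi) (hdeglow k₂ j hj) h2.le hd₁.le
      rw [div_le_div_iff₀ (mul_pos hd₁ hd₂) (mul_pos h1 h2)]
      exact mul_le_mul_of_nonneg_left hprod hβ0.le
    calc (Ah i j)^2/(degh k₁ i * degh k₂ j) ≤ (Ah i j)^2/(ρ^2*(deg k₁ i * deg k₂ j)) := step1
      _ = (R*(Ah i j)^2)/(deg k₁ i * deg k₂ j) := step2
      _ ≤ ((A i j)^2 + β)/(deg k₁ i*deg k₂ j) := step3
      _ = (A i j)^2/(deg k₁ i*deg k₂ j) + β/(deg k₁ i*deg k₂ j) := step4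
      _ ≤ (A i j)^2/(deg k₁ i*deg k₂ j) + C := by linarith [step5]
  -- sum up
  have hsum1 : ∑ i ∈ D k₁, ∑ j ∈ D k₂, (Ah i j)^2/(degh k₁ i * degh k₂ j)
      ≤ ∑ i ∈ D k₁, ∑ j ∈ D k₂, ((A i j)^2/(deg k₁ i * deg k₂ j) + C) := by
    apply Finset.sum_le_sum
    intro i hi
    apply Finset.sum_le_sum
    intro j hj
    exact hterm i hi j hj
  have hsum2 : ∑ i ∈ D k₁, ∑ j ∈ D k₂, ((A i j)^2/(deg k₁ i * deg k₂ j) + C)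
      = (∑ i ∈ D k₁, ∑ j ∈ D k₂, (A i j)^2/(deg k₁ i * deg k₂ j))
        + ((D k₁).card : ℝ) * (((D k₂).card : ℝ) * C) := by
    calc ∑ i ∈ D k₁, ∑ j ∈ D k₂, ((A i j)^2/(deg k₁ i * deg k₂ j) + C)
        = ∑ i ∈ D k₁, ((∑ j ∈ D k₂, (A i j)^2/(deg k₁ i * deg k₂ j)) + ((D k₂).card : ℝ) * C) := by
          apply Finset.sum_congr rfl
          intro i _
          rw [Finset.sum_add_distrib, Finset.sum_const, nsmul_eq_mul]
      _ = (∑ i ∈ D k₁, ∑ j ∈ D k₂, (A i j)^2/(deg k₁ i * deg k₂ j))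
          + ((D k₁).card:ℝ)*(((D k₂).card:ℝ)*C) := by
          rw [Finset.sum_add_distrib, Finset.sum_const, nsmul_eq_mul]
  have hfinal : ((D k₁).card : ℝ) * (((D k₂).card : ℝ) * C) ≤ 24 * c / m ^ 4 * ε := by
    have h4 : ((D k₁).card : ℝ) * ((D k₂).card : ℝ)
        ≤ 4*((((D k₁).card:ℝ)-1)*((((D k₂).card:ℝ))-1)) := by
      have h5 : (0:ℝ) ≤ (((D k₁).card:ℝ)-2)*((((D k₂).card:ℝ))-2) :=
        mul_nonneg (by linarith) (by linarith)
      have h6 : (0:ℝ) ≤ (((D k₁).card:ℝ)-1)*((((D k₂).card:ℝ))-1) :=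
        mul_nonneg (by linarith) (by linarith)
      linarith [h5, h6, hn₁, hn₂]
    have e : 4*((((D k₁).card:ℝ)-1)*((((D k₂).card:ℝ))-1))*C = 24 * c / m ^ 4 * ε := by
      rw [hCdef, hβdef]
      have hm' : m ≠ 0 := ne_of_gt hm0
      have ha' : (((D k₁).card:ℝ)-1) ≠ 0 := by linarith
      have hb' : (((D k₂).card:ℝ)-1) ≠ 0 := by linarith
      field_simp
      ring
    calc ((D k₁).card : ℝ) * (((D k₂).card : ℝ) * C)
        = (((D k₁).card : ℝ) * ((D k₂).card : ℝ)) * C := by ring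
      _ ≤ 4*((((D k₁).card:ℝ)-1)*((((D k₂).card:ℝ))-1))*C := by
          apply mul_le_mul_of_nonneg_right h4 hC0.le
      _ = 24 * c / m ^ 4 * ε := e
  calc ∑ i ∈ D k₁, ∑ j ∈ D k₂, (Ah i j)^2/(degh k₁ i * degh k₂ j)
      ≤ ∑ i ∈ D k₁, ∑ j ∈ D k₂, ((A i j)^2/(deg k₁ i * deg k₂ j) + C) := hsum1
    _ = (∑ i ∈ D k₁, ∑ j ∈ D k₂, (A i j)^2/(deg k₁ i * deg k₂ j))
        + ((D k₁).card : ℝ) * (((D k₂).card : ℝ) * C) := hsum2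
    _ ≤ ε₁ + 24 * c / m ^ 4 * ε := add_le_add (hassump k₁ k₂ hk) hfinal
end

section
/- Under the shared clustering-perturbation setup, suppose additionally that there is ε₂ > 0 such that for every k ∈ [K] and every i ∈ D_k, [ Σ_{j∉D_k} A_{ij}/d_i^{(k)} ] · [ Σ_{i₁,j₁∈D_k} A_{i₁j₁}²/(d_{i₁}^{(k)}·d_{j₁}^{(k)}) ]^{1/2} ≤ ε₂. Then for every k ∈ [K] and every i ∈ D_k, [ Σ_{j∉D_k} Â_{ij}/d̂_i^{(k)} ] · [ Σ_{i₁,j₁∈D_k} Â_{i₁j₁}²/(d̂_{i₁}^{(k)}·d̂_{j₁}^{(k)}) ]^{1/2} ≤ ε₂ + A₇·ε, where A₇ = 80Mc/m⁷. -/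
/-!
The Gaussian kernel `t ↦ exp (-t² / (2σ²))` is `c`-Lipschitz with `c = 1 / (σ√e)`, so every
affinity moves by at most `δ = cε < m / 2`; in particular the estimated intra-cluster affinities
stay above `m / 2`. On a cluster of size `n` all degrees then lie in `[(n - 1) m / 2, n - 1]` and
move by at most `nδ`. Consequently the off-cluster weight moves by at most `6Mδ / m²` and the
squared normalized Frobenius norm by at most `96δ / m⁴`; since the latter is at least `m²`, its
square root moves by at most `48δ / m⁵`. Expanding the product with the a priori bounds `M / m`
and `4 / m` on the two factors gives an extra `(48M / m⁶ + 24M / m³) δ ≤ 80Mcε / m⁷`.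
-/

open Finset Real

theorem hasDerivAt_exp_neg_sq_div (σ t : ℝ) :
    HasDerivAt (fun x : ℝ => exp (-x ^ 2 / (2 * σ ^ 2)))
      (-t / σ ^ 2 * exp (-t ^ 2 / (2 * σ ^ 2))) t := by
  have h : HasDerivAt (fun x : ℝ => -x ^ 2 / (2 * σ ^ 2)) (-t / σ ^ 2) t :=
    ((hasDerivAt_pow 2 t).neg.div_const _).congr_deriv (by push_cast; ring)
  simpa only [mul_comm] using h.exp

theorem mul_exp_neg_sq_div_two_le (u : ℝ) : u * exp (-u ^ 2 / 2) ≤ exp (-1 / 2) := by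
  have hu : u ≤ exp ((u ^ 2 - 1) / 2) := by
    nlinarith [add_one_le_exp ((u ^ 2 - 1) / 2), sq_nonneg (u - 1)]
  calc u * exp (-u ^ 2 / 2) ≤ exp ((u ^ 2 - 1) / 2) * exp (-u ^ 2 / 2) := by gcongr
    _ = exp (-1 / 2) := by rw [← exp_add]; ring_nf

theorem abs_deriv_exp_neg_sq_div_le {σ : ℝ} (hσ : 0 < σ) (t : ℝ) :
    |-t / σ ^ 2 * exp (-t ^ 2 / (2 * σ ^ 2))| ≤ 1 / (σ * √(exp 1)) := by
  have key := mul_exp_neg_sq_div_two_le (|t| / σ)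
  rw [div_pow, sq_abs] at key
  rw [← exp_half, abs_mul, abs_exp, abs_div, abs_neg, abs_of_pos (by positivity : 0 < σ ^ 2)]
  calc |t| / σ ^ 2 * exp (-t ^ 2 / (2 * σ ^ 2))
      = 1 / σ * (|t| / σ * exp (-(t ^ 2 / σ ^ 2) / 2)) := by field_simp
    _ ≤ 1 / σ * exp (-1 / 2) := by gcongr
    _ = 1 / (σ * exp (1 / 2)) := by rw [neg_div, exp_neg]; field_simp

theorem abs_exp_neg_sq_div_sub_le {σ : ℝ} (hσ : 0 < σ) (x y : ℝ) :
    |exp (-x ^ 2 / (2 * σ ^ 2)) - exp (-y ^ 2 / (2 * σ ^ 2))|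
      ≤ 1 / (σ * √(exp 1)) * |x - y| := by
  simpa only [Real.norm_eq_abs] using convex_univ.norm_image_sub_le_of_norm_hasDerivWithin_le
    (fun t _ => (hasDerivAt_exp_neg_sq_div σ t).hasDerivWithinAt)
    (fun t _ => abs_deriv_exp_neg_sq_div_le hσ t) (Set.mem_univ y) (Set.mem_univ x)

theorem div_sub_div_le_of_abs_sub_le {a b x y L L' δ η : ℝ} (ha₀ : 0 ≤ a) (ha₁ : a ≤ 1)
    (hL : 0 < L) (hx : L ≤ x) (hL' : 0 < L') (hy : L' ≤ y) (hab : |b - a| ≤ δ)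
    (hxy : |y - x| ≤ η) : b / y - a / x ≤ δ / L' + η / (L * L') := by
  have hx₀ : 0 < x := hL.trans_le hx
  have hy₀ : 0 < y := hL'.trans_le hy
  have hsplit : b / y - a / x = (b - a) / y + a * (x - y) / (x * y) := by field_simp; ring
  rw [hsplit]
  gcongr
  · exact (abs_nonneg _).trans hab
  · exact (le_abs_self _).trans hab
  · exact (abs_nonneg _).trans hxy
  · rw [abs_sub_comm] at hxy
    nlinarith [le_abs_self (x - y), abs_nonneg (x - y)]

theorem abs_sq_sub_sq_le_two_mul {a b : ℝ} (ha : |a| ≤ 1) (hb : |b| ≤ 1) :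
    |b ^ 2 - a ^ 2| ≤ 2 * |b - a| := by
  rw [sq_sub_sq, abs_mul]
  gcongr
  exact (abs_add_le b a).trans (by linarith)

theorem abs_mul_sub_mul_le {x₁ x₂ y₁ y₂ C : ℝ} (hx : |x₁| ≤ C) (hy : |y₂| ≤ C) :
    |y₁ * y₂ - x₁ * x₂| ≤ C * (|y₁ - x₁| + |y₂ - x₂|) := by
  calc |y₁ * y₂ - x₁ * x₂| = |y₂ * (y₁ - x₁) + x₁ * (y₂ - x₂)| := by ring_nf
    _ ≤ |y₂| * |y₁ - x₁| + |x₁| * |y₂ - x₂| := by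
        rw [← abs_mul, ← abs_mul]; exact abs_add_le _ _
    _ ≤ C * (|y₁ - x₁| + |y₂ - x₂|) := by rw [mul_add]; gcongr

theorem sqrt_le_sqrt_add_of_le_add {m x y η : ℝ} (hm : 0 < m) (hx : m ^ 2 ≤ x) (hη : 0 ≤ η)
    (hy : y ≤ x + η) : √y ≤ √x + η / (2 * m) := by
  have hmx : m ≤ √x := le_sqrt_of_sq_le hx
  have hsq : √x ^ 2 = x := sq_sqrt ((sq_nonneg m).trans hx)
  have hcross : η ≤ 2 * √x * (η / (2 * m)) := by
    rw [← mul_div_assoc, le_div_iff₀ (by positivity)]; nlinarith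
  rw [sqrt_le_left (by positivity)]
  nlinarith [sq_nonneg (η / (2 * m))]

theorem mul_le_add_of_le_add {x x' y y' X Y a b e : ℝ} (hx : 0 ≤ x) (hxX : x ≤ X)
    (hx' : x' ≤ x + a) (ha : 0 ≤ a) (hy' : 0 ≤ y') (hy'Y : y' ≤ Y) (hy : y' ≤ y + b)
    (hb : 0 ≤ b) (hxy : x * y ≤ e) : x' * y' ≤ e + X * b + a * Y := by
  nlinarith [mul_le_mul_of_nonneg_right hx' hy', mul_le_mul_of_nonneg_left hy hx,
    mul_le_mul_of_nonneg_right hxX hb, mul_le_mul_of_nonneg_left hy'Y ha]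

section Cluster

variable {ι : Type*}

noncomputable def clusterDegree (s : Finset ι) (A : ι → ι → ℝ) (i : ι) : ℝ :=
  ∑ j ∈ s, A i j

noncomputable def offClusterWeight [Fintype ι] [DecidableEq ι] (s : Finset ι)
    (A : ι → ι → ℝ) (i : ι) : ℝ :=
  ∑ j ∈ univ \ s, A i j / clusterDegree s A i

/-- `‖D^{-1/2} A_{ss} D^{-1/2}‖_F²`, where `D` is the diagonal matrix of cluster degrees. -/
noncomputable def normalizedFrobeniusSq (s : Finset ι) (A : ι → ι → ℝ) : ℝ :=
  ∑ i ∈ s, ∑ j ∈ s, A i j ^ 2 / (clusterDegree s A i * clusterDegree s A j)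

structure IsClusterAffinity (s : Finset ι) (m : ℝ) (A : ι → ι → ℝ) : Prop where
  nonneg : ∀ i j, 0 ≤ A i j
  le_one : ∀ i j, A i j ≤ 1
  diag : ∀ i, A i i = 0
  le_of_ne : ∀ i ∈ s, ∀ j ∈ s, i ≠ j → m ≤ A i j

namespace IsClusterAffinity

variable {s : Finset ι} {m : ℝ} {A : ι → ι → ℝ} {i : ι}

theorem of_eq_ite_exp [DecidableEq ι] {f : ι → ι → ℝ}
    (hA : ∀ i j, A i j = if i = j then 0 else exp (f i j)) (hf : ∀ i j, f i j ≤ 0)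
    (hm : ∀ i ∈ s, ∀ j ∈ s, i ≠ j → m ≤ A i j) : IsClusterAffinity s m A where
  nonneg i j := by rw [hA]; split_ifs <;> positivity
  le_one i j := by
    rw [hA]
    split_ifs
    exacts [zero_le_one, exp_le_one_iff.2 (hf i j)]
  diag i := by rw [hA, if_pos rfl]
  le_of_ne := hm

theorem abs_le_one (h : IsClusterAffinity s m A) (i j : ι) : |A i j| ≤ 1 :=
  (abs_of_nonneg (h.nonneg i j)).trans_le (h.le_one i j)

theorem clusterDegree_nonneg (h : IsClusterAffinity s m A) (i : ι) : 0 ≤ clusterDegree s A i :=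
  sum_nonneg fun j _ => h.nonneg i j

theorem clusterDegree_le (h : IsClusterAffinity s m A) (hi : i ∈ s) :
    clusterDegree s A i ≤ #s - 1 := by
  classical
  calc clusterDegree s A i = ∑ j ∈ s.erase i, A i j := (sum_erase s (h.diag i)).symm
    _ ≤ ∑ _j ∈ s.erase i, (1 : ℝ) := sum_le_sum fun j _ => h.le_one i j
    _ = #s - 1 := by simp [card_erase_of_mem hi, Nat.cast_sub (card_pos.2 ⟨i, hi⟩)]

theorem mul_le_clusterDegree (h : IsClusterAffinity s m A) (hi : i ∈ s) :
    (#s - 1) * m ≤ clusterDegree s A i := by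
  classical
  calc (#s - 1) * m = ∑ _j ∈ s.erase i, m := by
        simp [card_erase_of_mem hi, Nat.cast_sub (card_pos.2 ⟨i, hi⟩)]
    _ ≤ ∑ j ∈ s.erase i, A i j :=
        sum_le_sum fun j hj => h.le_of_ne i hi j (mem_of_mem_erase hj) (ne_of_mem_erase hj).symm
    _ = clusterDegree s A i := sum_erase s (h.diag i)

theorem abs_clusterDegree_le (h : IsClusterAffinity s m A) (hi : i ∈ s) :
    |clusterDegree s A i| ≤ #s - 1 :=
  (abs_of_nonneg (h.clusterDegree_nonneg i)).trans_le (h.clusterDegree_le hi)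

theorem le_one_of_two_le_card (h : IsClusterAffinity s m A) (hs : 2 ≤ #s) : m ≤ 1 := by
  obtain ⟨i, hi, j, hj, hij⟩ := one_lt_card.1 hs
  exact (h.le_of_ne i hi j hj hij).trans (h.le_one i j)

theorem clusterDegree_pos (h : IsClusterAffinity s m A) (hm : 0 < m) (hs : 2 ≤ #s)
    (hi : i ∈ s) : 0 < clusterDegree s A i := by
  have : (2 : ℝ) ≤ #s := by exact_mod_cast hs
  exact lt_of_lt_of_le (by nlinarith) (h.mul_le_clusterDegree hi)

theorem sq_le_normalizedFrobeniusSq (h : IsClusterAffinity s m A) (hm : 0 < m) (hs : 2 ≤ #s) :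
    m ^ 2 ≤ normalizedFrobeniusSq s A := by
  classical
  have hn : (2 : ℝ) ≤ #s := by exact_mod_cast hs
  have hrow : ∀ i ∈ s, m ^ 2 / (#s - 1)
      ≤ ∑ j ∈ s, A i j ^ 2 / (clusterDegree s A i * clusterDegree s A j) := by
    intro i hi
    have hterm : ∀ j ∈ s.erase i, m ^ 2 / (#s - 1) ^ 2
        ≤ A i j ^ 2 / (clusterDegree s A i * clusterDegree s A j) := by
      intro j hj
      have hj' := mem_of_mem_erase hj
      rw [sq (#s - 1 : ℝ)]
      exact div_le_div₀ (sq_nonneg _)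
        (pow_le_pow_left₀ hm.le (h.le_of_ne i hi j hj' (ne_of_mem_erase hj).symm) 2)
        (mul_pos (h.clusterDegree_pos hm hs hi) (h.clusterDegree_pos hm hs hj'))
        (mul_le_mul (h.clusterDegree_le hi) (h.clusterDegree_le hj')
          (h.clusterDegree_pos hm hs hj').le (by linarith))
    calc m ^ 2 / (#s - 1) = ∑ _j ∈ s.erase i, m ^ 2 / (#s - 1) ^ 2 := by
          rw [sum_const, card_erase_of_mem hi, nsmul_eq_mul, Nat.cast_sub (by omega), Nat.cast_one]
          field_simp
      _ ≤ ∑ j ∈ s.erase i, A i j ^ 2 / (clusterDegree s A i * clusterDegree s A j) :=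
          sum_le_sum hterm
      _ ≤ _ := sum_le_sum_of_subset_of_nonneg (erase_subset i s) fun j _ _ =>
          div_nonneg (sq_nonneg _)
            (mul_nonneg (h.clusterDegree_nonneg i) (h.clusterDegree_nonneg j))
  calc m ^ 2 ≤ #s * (m ^ 2 / (#s - 1)) := by
        rw [mul_div_assoc', le_div_iff₀ (by linarith)]; nlinarith
    _ = ∑ _i ∈ s, m ^ 2 / (#s - 1) := by rw [sum_const, nsmul_eq_mul]
    _ ≤ normalizedFrobeniusSq s A := sum_le_sum hrow

theorem normalizedFrobeniusSq_le (h : IsClusterAffinity s m A) (hm : 0 < m) (hs : 2 ≤ #s) :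
    normalizedFrobeniusSq s A ≤ (2 / m) ^ 2 := by
  have hn : (2 : ℝ) ≤ #s := by exact_mod_cast hs
  have hνm : 0 < (#s - 1 : ℝ) * m := mul_pos (by linarith) hm
  have hterm : ∀ i ∈ s, ∀ j ∈ s,
      A i j ^ 2 / (clusterDegree s A i * clusterDegree s A j) ≤ 1 / ((#s - 1) * m) ^ 2 := by
    intro i hi j hj
    rw [sq ((#s - 1 : ℝ) * m)]
    exact div_le_div₀ zero_le_one (pow_le_one₀ (h.nonneg i j) (h.le_one i j))
      (mul_pos hνm hνm)
      (mul_le_mul (h.mul_le_clusterDegree hi) (h.mul_le_clusterDegree hj) (by nlinarith)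
        (h.clusterDegree_pos hm hs hi).le)
  calc normalizedFrobeniusSq s A ≤ ∑ _i ∈ s, ∑ _j ∈ s, 1 / ((#s - 1) * m) ^ 2 :=
        sum_le_sum fun i hi => sum_le_sum fun j hj => hterm i hi j hj
    _ = (#s / ((#s - 1) * m)) ^ 2 := by simp only [sum_const, nsmul_eq_mul]; field_simp
    _ ≤ (2 / m) ^ 2 := pow_le_pow_left₀ (div_nonneg (by linarith) hνm.le)
        (by rw [div_le_div_iff₀ hνm hm]; nlinarith) 2

theorem offClusterWeight_nonneg [Fintype ι] [DecidableEq ι] (h : IsClusterAffinity s m A)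
    (i : ι) : 0 ≤ offClusterWeight s A i :=
  sum_nonneg fun j _ => div_nonneg (h.nonneg i j) (h.clusterDegree_nonneg i)

theorem offClusterWeight_le [Fintype ι] [DecidableEq ι] (h : IsClusterAffinity s m A)
    (hm : 0 < m) (hs : 2 ≤ #s) (hi : i ∈ s) :
    offClusterWeight s A i ≤ Fintype.card ι / m := by
  have hn : (2 : ℝ) ≤ #s := by exact_mod_cast hs
  have hterm : ∀ j ∈ univ \ s, A i j / clusterDegree s A i ≤ 1 / m := fun j _ =>
    div_le_div₀ zero_le_one (h.le_one i j) hm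
      (le_trans (by nlinarith) (h.mul_le_clusterDegree hi))
  calc offClusterWeight s A i ≤ ∑ _j ∈ univ \ s, 1 / m := sum_le_sum hterm
    _ ≤ ∑ _j : ι, 1 / m :=
        sum_le_sum_of_subset_of_nonneg sdiff_subset fun _ _ _ => by positivity
    _ = Fintype.card ι / m := by simp [div_eq_mul_inv]

end IsClusterAffinity

variable {s : Finset ι} {m δ : ℝ} {A B : ι → ι → ℝ}

theorem abs_clusterDegree_sub_le (hδ : ∀ i j, |B i j - A i j| ≤ δ) (i : ι) :
    |clusterDegree s B i - clusterDegree s A i| ≤ #s * δ := by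
  rw [clusterDegree, clusterDegree, ← sum_sub_distrib]
  calc |∑ j ∈ s, (B i j - A i j)| ≤ ∑ j ∈ s, |B i j - A i j| := abs_sum_le_sum_abs _ _
    _ ≤ ∑ _j ∈ s, δ := sum_le_sum fun j _ => hδ i j
    _ = #s * δ := by rw [sum_const, nsmul_eq_mul]

theorem div_clusterDegree_sub_le (hA : IsClusterAffinity s m A)
    (hB : IsClusterAffinity s (m / 2) B) (hm : 0 < m) (hs : 2 ≤ #s)
    (hδ : ∀ i j, |B i j - A i j| ≤ δ) {i : ι} (hi : i ∈ s) (j : ι) :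
    B i j / clusterDegree s B i - A i j / clusterDegree s A i ≤ 6 * δ / m ^ 2 := by
  set ν : ℝ := #s - 1 with hν
  have hn : (2 : ℝ) ≤ #s := by exact_mod_cast hs
  have hν₁ : 1 ≤ ν := by linarith
  have hm₁ : m ≤ 1 := hA.le_one_of_two_le_card hs
  have hδ₀ : 0 ≤ δ := (abs_nonneg _).trans (hδ i i)
  refine (div_sub_div_le_of_abs_sub_le (hA.nonneg i j) (hA.le_one i j) (by positivity)
    (hA.mul_le_clusterDegree hi) (by positivity) (hB.mul_le_clusterDegree hi) (hδ i j)
    (abs_clusterDegree_sub_le hδ i)).trans ?_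
  have e₁ : δ / (ν * (m / 2)) = 2 * δ * m / (ν * m ^ 2) := by field_simp
  have e₂ : #s * δ / (ν * m * (ν * (m / 2))) = 2 * (#s / ν) * δ / (ν * m ^ 2) := by
    field_simp
  have hnν : (#s : ℝ) / ν ≤ 2 := by rw [div_le_iff₀ (by linarith)]; linarith
  rw [e₁, e₂, ← add_div, div_le_div_iff₀ (by positivity) (by positivity)]
  nlinarith [mul_le_mul_of_nonneg_left hnν hδ₀, mul_le_mul_of_nonneg_left hm₁ hδ₀,
    mul_nonneg hδ₀ (sub_nonneg.2 hν₁), sq_nonneg m]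

theorem offClusterWeight_le_add [Fintype ι] [DecidableEq ι] (hA : IsClusterAffinity s m A)
    (hB : IsClusterAffinity s (m / 2) B) (hm : 0 < m) (hs : 2 ≤ #s)
    (hδ : ∀ i j, |B i j - A i j| ≤ δ) {i : ι} (hi : i ∈ s) :
    offClusterWeight s B i ≤ offClusterWeight s A i + Fintype.card ι * (6 * δ / m ^ 2) := by
  have hδ₀ : 0 ≤ δ := (abs_nonneg _).trans (hδ i i)
  calc offClusterWeight s B i
      ≤ ∑ j ∈ univ \ s, (A i j / clusterDegree s A i + 6 * δ / m ^ 2) :=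
        sum_le_sum fun j _ => by linarith [div_clusterDegree_sub_le hA hB hm hs hδ hi j]
    _ = offClusterWeight s A i + #(univ \ s) * (6 * δ / m ^ 2) := by
        rw [sum_add_distrib, sum_const, nsmul_eq_mul]; rfl
    _ ≤ offClusterWeight s A i + Fintype.card ι * (6 * δ / m ^ 2) := by
        gcongr
        exact card_le_univ (univ \ s)

theorem sq_div_clusterDegree_mul_sub_le (hA : IsClusterAffinity s m A)
    (hB : IsClusterAffinity s (m / 2) B) (hm : 0 < m) (hs : 2 ≤ #s)
    (hδ : ∀ i j, |B i j - A i j| ≤ δ) {i j : ι} (hi : i ∈ s) (hj : j ∈ s) :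
    B i j ^ 2 / (clusterDegree s B i * clusterDegree s B j)
        - A i j ^ 2 / (clusterDegree s A i * clusterDegree s A j)
      ≤ 24 * δ / ((#s - 1) ^ 2 * m ^ 4) := by
  set ν : ℝ := #s - 1 with hν
  have hn : (2 : ℝ) ≤ #s := by exact_mod_cast hs
  have hm₁ : m ≤ 1 := hA.le_one_of_two_le_card hs
  have hδ₀ : 0 ≤ δ := (abs_nonneg _).trans (hδ i i)
  have hνm : 0 < ν * m := mul_pos (by linarith) hm
  have hνm₂ : 0 < ν * (m / 2) := mul_pos (by linarith) (by positivity)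
  have hdeg : |clusterDegree s B i * clusterDegree s B j
        - clusterDegree s A i * clusterDegree s A j| ≤ ν * (#s * δ + #s * δ) :=
    (abs_mul_sub_mul_le (hA.abs_clusterDegree_le hi) (hB.abs_clusterDegree_le hj)).trans
      (mul_le_mul_of_nonneg_left (add_le_add (abs_clusterDegree_sub_le hδ i)
        (abs_clusterDegree_sub_le hδ j)) (by linarith))
  refine (div_sub_div_le_of_abs_sub_le (sq_nonneg _)
    (pow_le_one₀ (hA.nonneg i j) (hA.le_one i j)) (mul_pos hνm hνm)
    (mul_le_mul (hA.mul_le_clusterDegree hi) (hA.mul_le_clusterDegree hj) hνm.le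
      (hA.clusterDegree_nonneg i))
    (mul_pos hνm₂ hνm₂)
    (mul_le_mul (hB.mul_le_clusterDegree hi) (hB.mul_le_clusterDegree hj) hνm₂.le
      (hB.clusterDegree_nonneg i))
    ((abs_sq_sub_sq_le_two_mul (hA.abs_le_one i j) (hB.abs_le_one i j)).trans
      (mul_le_mul_of_nonneg_left (hδ i j) zero_le_two)) hdeg).trans ?_
  have e₁ : 2 * δ / (ν * (m / 2) * (ν * (m / 2))) = 8 * δ * m ^ 2 / (ν ^ 2 * m ^ 4) := by
    field_simp; ring
  have e₂ : ν * (#s * δ + #s * δ) / (ν * m * (ν * m) * (ν * (m / 2) * (ν * (m / 2))))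
      = 8 * (#s / ν) * δ / (ν ^ 2 * m ^ 4) := by
    field_simp; ring
  have hnν : (#s : ℝ) / ν ≤ 2 := by rw [div_le_iff₀ (by linarith)]; linarith
  rw [e₁, e₂, ← add_div]
  gcongr
  nlinarith [pow_le_one₀ hm.le hm₁ (n := 2), mul_le_mul_of_nonneg_left hnν hδ₀]

theorem normalizedFrobeniusSq_le_add (hA : IsClusterAffinity s m A)
    (hB : IsClusterAffinity s (m / 2) B) (hm : 0 < m) (hs : 2 ≤ #s)
    (hδ : ∀ i j, |B i j - A i j| ≤ δ) :
    normalizedFrobeniusSq s B ≤ normalizedFrobeniusSq s A + 96 * δ / m ^ 4 := by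
  have hn : (2 : ℝ) ≤ #s := by exact_mod_cast hs
  obtain ⟨i₀, hi₀⟩ := card_pos.1 (by omega : 0 < #s)
  have hδ₀ : 0 ≤ δ := (abs_nonneg _).trans (hδ i₀ i₀)
  calc normalizedFrobeniusSq s B
      ≤ ∑ i ∈ s, ∑ j ∈ s, (A i j ^ 2 / (clusterDegree s A i * clusterDegree s A j)
          + 24 * δ / ((#s - 1) ^ 2 * m ^ 4)) :=
        sum_le_sum fun i hi => sum_le_sum fun j hj => by
          linarith [sq_div_clusterDegree_mul_sub_le hA hB hm hs hδ hi hj]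
    _ = normalizedFrobeniusSq s A + (#s / (#s - 1)) ^ 2 * (24 * δ / m ^ 4) := by
        simp only [sum_add_distrib, sum_const, nsmul_eq_mul]
        rw [normalizedFrobeniusSq]
        field_simp
    _ ≤ normalizedFrobeniusSq s A + 2 ^ 2 * (24 * δ / m ^ 4) := by
        gcongr
        · exact div_nonneg (by linarith) (by linarith)
        · rw [div_le_iff₀ (by linarith)]; linarith
    _ = normalizedFrobeniusSq s A + 96 * δ / m ^ 4 := by ring

theorem offClusterWeight_mul_sqrt_le_add [Fintype ι] [DecidableEq ι]
    (hA : IsClusterAffinity s m A) (hB : IsClusterAffinity s (m / 2) B) (hm : 0 < m)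
    (hs : 2 ≤ #s) (hδ : ∀ i j, |B i j - A i j| ≤ δ) {i : ι} (hi : i ∈ s) {ε₂ : ℝ}
    (h₂ : offClusterWeight s A i * √(normalizedFrobeniusSq s A) ≤ ε₂) :
    offClusterWeight s B i * √(normalizedFrobeniusSq s B)
      ≤ ε₂ + 80 * Fintype.card ι * δ / m ^ 7 := by
  have hδ₀ : 0 ≤ δ := (abs_nonneg _).trans (hδ i i)
  have hm₁ : m ≤ 1 := hA.le_one_of_two_le_card hs
  have hsqrtB : √(normalizedFrobeniusSq s B) ≤ 2 / (m / 2) :=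
    (sqrt_le_left (by positivity)).2 (hB.normalizedFrobeniusSq_le (half_pos hm) hs)
  refine (mul_le_add_of_le_add (hA.offClusterWeight_nonneg i) (hA.offClusterWeight_le hm hs hi)
    (offClusterWeight_le_add hA hB hm hs hδ hi) (by positivity) (sqrt_nonneg _) hsqrtB
    (sqrt_le_sqrt_add_of_le_add hm (hA.sq_le_normalizedFrobeniusSq hm hs) (by positivity)
      (normalizedFrobeniusSq_le_add hA hB hm hs hδ)) (by positivity) h₂).trans ?_
  have hsplit : Fintype.card ι / m * (96 * δ / m ^ 4 / (2 * m))
      + Fintype.card ι * (6 * δ / m ^ 2) * (2 / (m / 2))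
      = Fintype.card ι * δ * (48 + 24 * m ^ 3) / m ^ 6 := by
    field_simp; ring
  rw [add_assoc, hsplit, add_le_add_iff_left, div_le_div_iff₀ (by positivity) (by positivity)]
  calc Fintype.card ι * δ * (48 + 24 * m ^ 3) * m ^ 7 ≤ Fintype.card ι * δ * 80 * m ^ 6 := by
        gcongr ?_ * ?_
        · gcongr
          nlinarith [pow_le_one₀ hm.le hm₁ (n := 3)]
        · exact pow_le_pow_of_le_one hm.le hm₁ (by norm_num)
    _ = 80 * Fintype.card ι * δ * m ^ 6 := by ring

end Cluster

theorem offcluster_product_perturbation_bound_general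
    (M K : ℕ)
    -- the clusters: a partition of [M] into K clusters, each of size ≥ 2
    (D : Fin K → Finset (Fin M))
    (hDcard : ∀ k : Fin K, 2 ≤ (D k).card)
    -- true and estimated distances: nonnegative, symmetric, zero diagonal
    (d dh : Fin M → Fin M → ℝ)
    -- affinity matrices
    (σa : ℝ) (hσa : 0 < σa)
    (A Ah : Fin M → Fin M → ℝ)
    (hA : ∀ i j, A i j = if i = j then 0 else Real.exp (-(d i j) ^ 2 / (2 * σa ^ 2)))
    (hAh : ∀ i j, Ah i j = if i = j then 0 else Real.exp (-(dh i j) ^ 2 / (2 * σa ^ 2)))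
    -- cluster degrees
    (deg degh : Fin K → Fin M → ℝ)
    (hdeg : ∀ k i, deg k i = ∑ j ∈ D k, A i j)
    (hdegh : ∀ k i, degh k i = ∑ j ∈ D k, Ah i j)
    -- m = min intra-cluster true affinity, c = Lipschitz constant of the kernel
    (m c : ℝ)
    (hc : c = 1 / (σa * Real.sqrt (Real.exp 1)))
    (hm_le : ∀ k : Fin K, ∀ i ∈ D k, ∀ j ∈ D k, i ≠ j → m ≤ A i j)
    -- the estimation error event
    (ε : ℝ) (hε : 0 < ε) (hεlt : ε < m / (2 * c))
    (hclose : ∀ i j : Fin M, i ≠ j → |dh i j - d i j| < ε)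
    -- Assumption 3 for the true quantities
    (ε₂ : ℝ)
    (hassump : ∀ k : Fin K, ∀ i ∈ D k,
      (∑ j ∈ Finset.univ \ D k, A i j / deg k i)
        * Real.sqrt (∑ i₁ ∈ D k, ∑ j₁ ∈ D k,
            (A i₁ j₁) ^ 2 / (deg k i₁ * deg k j₁)) ≤ ε₂) :
    ∀ k : Fin K, ∀ i ∈ D k,
      (∑ j ∈ Finset.univ \ D k, Ah i j / degh k i)
        * Real.sqrt (∑ i₁ ∈ D k, ∑ j₁ ∈ D k,
            (Ah i₁ j₁) ^ 2 / (degh k i₁ * degh k j₁))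
        ≤ ε₂ + (80 * (M : ℝ) * c / m ^ 7) * ε := by
  have hc₀ : 0 < c := by rw [hc]; positivity
  have hm : 0 < m := (div_pos_iff_of_pos_right (by positivity)).1 (hε.trans hεlt)
  have hδ : ∀ i j, |Ah i j - A i j| ≤ c * ε := by
    intro i j
    rw [hA, hAh]
    split_ifs with hij
    · simpa using (mul_pos hc₀ hε).le
    · rw [hc]
      exact (abs_exp_neg_sq_div_sub_le hσa _ _).trans (by gcongr; exact (hclose i j hij).le)
  have hδm : c * ε ≤ m / 2 := by
    have := (lt_div_iff₀ (by positivity)).1 hεlt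
    linarith
  have hexp_arg : ∀ e : Fin M → Fin M → ℝ, ∀ i j, -(e i j) ^ 2 / (2 * σa ^ 2) ≤ 0 :=
    fun e i j => div_nonpos_of_nonpos_of_nonneg (neg_nonpos.2 (sq_nonneg _)) (by positivity)
  intro k i hi
  have hAk : IsClusterAffinity (D k) m A := .of_eq_ite_exp hA (hexp_arg d) (hm_le k)
  have hAhk : IsClusterAffinity (D k) (m / 2) Ah := .of_eq_ite_exp hAh (hexp_arg dh)
    fun i hi j hj hij => by linarith [hm_le k i hi j hj hij, (abs_le.1 (hδ i j)).1, hδm]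
  obtain rfl : deg = fun k => clusterDegree (D k) A := funext₂ hdeg
  obtain rfl : degh = fun k => clusterDegree (D k) Ah := funext₂ hdegh
  have hbound := offClusterWeight_mul_sqrt_le_add hAk hAhk hm (hDcard k) hδ hi (hassump k i hi)
  rw [Fintype.card_fin] at hbound
  exact hbound.trans_eq (by ring)

/-- SHARED SETUP + STATEMENT. -/
theorem offcluster_product_perturbation_bound
    (M K : ℕ) (hM : 2 ≤ M) (hK : 1 ≤ K)
    -- the clusters: a partition of [M] into K clusters, each of size ≥ 2
    (D : Fin K → Finset (Fin M))
    (hDdisj : ∀ k l : Fin K, k ≠ l → Disjoint (D k) (D l))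
    (hDcover : ∀ i : Fin M, ∃ k : Fin K, i ∈ D k)
    (hDcard : ∀ k : Fin K, 2 ≤ (D k).card)
    -- true and estimated distances: nonnegative, symmetric, zero diagonal
    (d dh : Fin M → Fin M → ℝ)
    (hd0 : ∀ i j, 0 ≤ d i j) (hdh0 : ∀ i j, 0 ≤ dh i j)
    (hdsymm : ∀ i j, d i j = d j i) (hdhsymm : ∀ i j, dh i j = dh j i)
    (hddiag : ∀ i, d i i = 0) (hdhdiag : ∀ i, dh i i = 0)
    -- affinity matrices
    (σa : ℝ) (hσa : 0 < σa)
    (A Ah : Fin M → Fin M → ℝ)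
    (hA : ∀ i j, A i j = if i = j then 0 else Real.exp (-(d i j) ^ 2 / (2 * σa ^ 2)))
    (hAh : ∀ i j, Ah i j = if i = j then 0 else Real.exp (-(dh i j) ^ 2 / (2 * σa ^ 2)))
    -- cluster degrees
    (deg degh : Fin K → Fin M → ℝ)
    (hdeg : ∀ k i, deg k i = ∑ j ∈ D k, A i j)
    (hdegh : ∀ k i, degh k i = ∑ j ∈ D k, Ah i j)
    -- m = min intra-cluster true affinity, c = Lipschitz constant of the kernel
    (m c : ℝ)
    (hc : c = 1 / (σa * Real.sqrt (Real.exp 1)))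
    (hm_le : ∀ k : Fin K, ∀ i ∈ D k, ∀ j ∈ D k, i ≠ j → m ≤ A i j)
    (hm_attained : ∃ k : Fin K, ∃ i ∈ D k, ∃ j ∈ D k, i ≠ j ∧ m = A i j)
    -- the estimation error event
    (ε : ℝ) (hε : 0 < ε) (hεlt : ε < m / (2 * c))
    (hclose : ∀ i j : Fin M, i ≠ j → |dh i j - d i j| < ε)
    -- Assumption 3 for the true quantities
    (ε₂ : ℝ) (hε₂ : 0 < ε₂)
    (hassump : ∀ k : Fin K, ∀ i ∈ D k,
      (∑ j ∈ Finset.univ \ D k, A i j / deg k i)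
        * Real.sqrt (∑ i₁ ∈ D k, ∑ j₁ ∈ D k,
            (A i₁ j₁) ^ 2 / (deg k i₁ * deg k j₁)) ≤ ε₂) :
    ∀ k : Fin K, ∀ i ∈ D k,
      (∑ j ∈ Finset.univ \ D k, Ah i j / degh k i)
        * Real.sqrt (∑ i₁ ∈ D k, ∑ j₁ ∈ D k,
            (Ah i₁ j₁) ^ 2 / (degh k i₁ * degh k j₁))
        ≤ ε₂ + (80 * (M : ℝ) * c / m ^ 7) * ε :=
  offcluster_product_perturbation_bound_general M K D hDcard d dh σa hσa A Ah hA hAh deg degh hdeg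
    hdegh m c hc hm_le ε hε hεlt hclose ε₂ hassump
end

section
/- Let A and Â be symmetric M×M real matrices with zero diagonal and all entries in [0,1], let m > 0, c > 0 and 0 < ε < m/(2c), and suppose that |Â_{ij} − A_{ij}| ≤ c·ε for all i, j, that every row sum of A satisfies Σ_{j} A_{ij} ≥ m, and that every row sum of Â satisfies Σ_{j} Â_{ij} ≥ m − c·ε. Define the normalized Lagrange matrices L_{ij} := A_{ij} / ( (Σ_{j₁} A_{i j₁})^{1/2} · (Σ_{i₁} A_{i₁ j})^{1/2} ) and L̂_{ij} := Â_{ij} / ( (Σ_{j₁} Â_{i j₁})^{1/2} · (Σ_{i₁} Â_{i₁ j})^{1/2} ). Then for all i, j, |L̂_{ij} − L_{ij}| ≤ 12·M³·c·ε / m³. -/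
lemma sqrt_prod_lower (m x y : ℝ) (hm : 0 ≤ m) (hx : m ≤ x) (hy : m ≤ y) :
    m ≤ Real.sqrt x * Real.sqrt y := by
  have hs : Real.sqrt m * Real.sqrt m = m := Real.mul_self_sqrt hm
  calc m = Real.sqrt m * Real.sqrt m := hs.symm
    _ ≤ Real.sqrt x * Real.sqrt y := by
        apply mul_le_mul (Real.sqrt_le_sqrt hx) (Real.sqrt_le_sqrt hy)
          (Real.sqrt_nonneg m) (Real.sqrt_nonneg x)

lemma key_lemma (m M E a ah x y xh yh : ℝ)
    (hm : 0 < m) (hE : 0 < E) (hEm : E < m / 2) (hM1 : (1:ℝ) ≤ M) (hmM : m ≤ M)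
    (hx : m ≤ x) (hxM : x ≤ M) (hy : m ≤ y) (hyM : y ≤ M)
    (hxh : m - E ≤ xh) (hxhM : xh ≤ M) (hyh : m - E ≤ yh) (hyhM : yh ≤ M)
    (hdx : |xh - x| ≤ M * E) (hdy : |yh - y| ≤ M * E)
    (ha : 0 ≤ a) (ha1 : a ≤ 1) (haah : |ah - a| ≤ E) :
    |ah / (Real.sqrt xh * Real.sqrt yh) - a / (Real.sqrt x * Real.sqrt y)|
      ≤ 12 * M ^ 3 * E / m ^ 3 := by
  have hm2 : (0:ℝ) < m - E := by linarith
  have hx0 : (0:ℝ) < x := lt_of_lt_of_le hm hx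
  have hy0 : (0:ℝ) < y := lt_of_lt_of_le hm hy
  have hxh0 : (0:ℝ) < xh := lt_of_lt_of_le hm2 hxh
  have hyh0 : (0:ℝ) < yh := lt_of_lt_of_le hm2 hyh
  set p := Real.sqrt x with hpdef
  set q := Real.sqrt y with hqdef
  set ph := Real.sqrt xh with hphdef
  set qh := Real.sqrt yh with hqhdef
  set s := Real.sqrt m with hsdef
  set S := Real.sqrt M with hSdef
  have hp : 0 < p := Real.sqrt_pos.mpr hx0
  have hq : 0 < q := Real.sqrt_pos.mpr hy0
  have hph : 0 < ph := Real.sqrt_pos.mpr hxh0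
  have hqh : 0 < qh := Real.sqrt_pos.mpr hyh0
  have hs : 0 < s := Real.sqrt_pos.mpr hm
  have hS : 0 < S := Real.sqrt_pos.mpr (by linarith)
  have hp2 : p ^ 2 = x := Real.sq_sqrt hx0.le
  have hq2 : q ^ 2 = y := Real.sq_sqrt hy0.le
  have hph2 : ph ^ 2 = xh := Real.sq_sqrt hxh0.le
  have hqh2 : qh ^ 2 = yh := Real.sq_sqrt hyh0.le
  have hs2 : s ^ 2 = m := Real.sq_sqrt hm.le
  have hS2 : S ^ 2 = M := Real.sq_sqrt (by linarith)
  have hsS : s ≤ S := Real.sqrt_le_sqrt hmM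
  have hS1 : (1:ℝ) ≤ S := by nlinarith
  -- lower bounds on products
  have hpq : m ≤ p * q := sqrt_prod_lower m x y hm.le hx hy
  have hpqh : m - E ≤ ph * qh := sqrt_prod_lower (m - E) xh yh hm2.le hxh hyh
  have hpqh2 : m / 2 ≤ ph * qh := by linarith
  -- upper bounds
  have hpS : p ≤ S := Real.sqrt_le_sqrt hxM
  have hqS : q ≤ S := Real.sqrt_le_sqrt hyM
  have hphS : ph ≤ S := Real.sqrt_le_sqrt hxhM
  have hqhS : qh ≤ S := Real.sqrt_le_sqrt hyhM
  have hsp : s ≤ p := Real.sqrt_le_sqrt hx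
  have hsq : s ≤ q := Real.sqrt_le_sqrt hy
  -- |p - ph| ≤ M*E/s
  have hdp : |p - ph| * s ≤ M * E := by
    have h1 : |p - ph| * (p + ph) = |x - xh| := by
      rw [← abs_of_pos (show (0:ℝ) < p + ph by linarith), ← abs_mul]
      congr 1
      rw [← hp2, ← hph2]; ring
    have h2 : |p - ph| * s ≤ |p - ph| * (p + ph) := by
      apply mul_le_mul_of_nonneg_left (by linarith) (abs_nonneg _)
    rw [h1] at h2
    calc |p - ph| * s ≤ |x - xh| := h2
      _ = |xh - x| := abs_sub_comm x xh
      _ ≤ M * E := hdx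
  have hdq : |q - qh| * s ≤ M * E := by
    have h1 : |q - qh| * (q + qh) = |y - yh| := by
      rw [← abs_of_pos (show (0:ℝ) < q + qh by linarith), ← abs_mul]
      congr 1
      rw [← hq2, ← hqh2]; ring
    have h2 : |q - qh| * s ≤ |q - qh| * (q + qh) := by
      apply mul_le_mul_of_nonneg_left (by linarith) (abs_nonneg _)
    rw [h1] at h2
    calc |q - qh| * s ≤ |y - yh| := h2
      _ = |yh - y| := abs_sub_comm y yh
      _ ≤ M * E := hdy
  -- decomposition
  have heq : ah / (ph * qh) - a / (p * q)
      = (ah - a) / (ph * qh) + a * (p * q - ph * qh) / ((ph * qh) * (p * q)) := by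
    field_simp
    ring
  have hb1 : |(ah - a) / (ph * qh)| ≤ E / (m / 2) := by
    rw [abs_div, abs_of_pos (by positivity : (0:ℝ) < ph * qh)]
    exact div_le_div₀ hE.le haah (by linarith) hpqh2
  have hΔ : |p * q - ph * qh| ≤ 2 * S * (M * E) / s := by
    have hdecomp : p * q - ph * qh = q * (p - ph) + ph * (q - qh) := by ring
    have hdp' : |p - ph| ≤ M * E / s := by
      rw [le_div_iff₀ hs]; exact hdp
    have hdq' : |q - qh| ≤ M * E / s := by
      rw [le_div_iff₀ hs]; exact hdq
    calc |p * q - ph * qh| = |q * (p - ph) + ph * (q - qh)| := by rw [hdecomp]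
      _ ≤ |q * (p - ph)| + |ph * (q - qh)| := abs_add_le _ _
      _ = q * |p - ph| + ph * |q - qh| := by
          rw [abs_mul, abs_mul, abs_of_pos hq, abs_of_pos hph]
      _ ≤ S * (M * E / s) + S * (M * E / s) := by
          gcongr
      _ = 2 * S * (M * E) / s := by ring
  have hb2 : |a * (p * q - ph * qh) / ((ph * qh) * (p * q))|
      ≤ (2 * S * (M * E) / s) / ((m / 2) * m) := by
    rw [abs_div, abs_mul, abs_of_pos (show (0:ℝ) < (ph*qh)*(p*q) by positivity),
      abs_of_nonneg ha]
    apply div_le_div₀ (by positivity) ?_ (by positivity) ?_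
    · calc a * |p * q - ph * qh| ≤ 1 * (2 * S * (M * E) / s) := by
            apply mul_le_mul ha1 hΔ (abs_nonneg _) zero_le_one
        _ = 2 * S * (M * E) / s := by ring
    · apply mul_le_mul hpqh2 hpq (by linarith) (by positivity)
  have hfinal : E / (m / 2) + (2 * S * (M * E) / s) / ((m / 2) * m)
      ≤ 12 * M ^ 3 * E / m ^ 3 := by
    have heqL : E / (m / 2) + (2 * S * (M * E) / s) / ((m / 2) * m)
        = (2 * s ^ 4 + 4 * S ^ 3 * s) * E / s ^ 6 := by
      rw [← hs2, ← hS2]; field_simp; ring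
    have heqR : 12 * M ^ 3 * E / m ^ 3 = 12 * S ^ 6 * E / s ^ 6 := by
      rw [← hs2, ← hS2]; ring
    rw [heqL, heqR]
    have h1 : s ^ 4 ≤ S ^ 4 := pow_le_pow_left₀ hs.le hsS 4
    have hS21 : 1 ≤ S ^ 2 := by rw [hS2]; linarith
    have h3 : S ^ 4 ≤ S ^ 6 := by
      calc S ^ 4 = S ^ 4 * 1 := (mul_one _).symm
        _ ≤ S ^ 4 * S ^ 2 := by
            exact mul_le_mul_of_nonneg_left hS21 (by positivity)
        _ = S ^ 6 := by ring
    have h4 : S ^ 3 * s ≤ S ^ 4 := by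
      calc S ^ 3 * s ≤ S ^ 3 * S := mul_le_mul_of_nonneg_left hsS (by positivity)
        _ = S ^ 4 := by ring
    have hS60 : (0:ℝ) ≤ S ^ 6 := by positivity
    have hnum : 2 * s ^ 4 + 4 * S ^ 3 * s ≤ 12 * S ^ 6 := by linarith
    apply div_le_div₀ (by positivity) ?_ (by positivity) le_rfl
    exact mul_le_mul_of_nonneg_right hnum hE.le
  calc |ah / (ph * qh) - a / (p * q)|
      = |(ah - a) / (ph * qh) + a * (p * q - ph * qh) / ((ph * qh) * (p * q))| := by rw [heq]
    _ ≤ |(ah - a) / (ph * qh)| + |a * (p * q - ph * qh) / ((ph * qh) * (p * q))| := abs_add_le _ _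
    _ ≤ E / (m / 2) + (2 * S * (M * E) / s) / ((m / 2) * m) := add_le_add hb1 hb2
    _ ≤ 12 * M ^ 3 * E / m ^ 3 := hfinal


/-- entrywise perturbation bound for the symmetrically normalized
Lagrange matrix `L = D^{-1/2} A D^{-1/2}`. -/
theorem lagrange_matrix_entry_perturbation_bound
    (M : ℕ) (hM : 2 ≤ M)
    (A Ah : Matrix (Fin M) (Fin M) ℝ)
    (hAsymm : A.IsSymm) (hAhsymm : Ah.IsSymm)
    (hAdiag : ∀ i, A i i = 0) (hAhdiag : ∀ i, Ah i i = 0)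
    (hArange : ∀ i j, A i j ∈ Set.Icc (0 : ℝ) 1)
    (hAhrange : ∀ i j, Ah i j ∈ Set.Icc (0 : ℝ) 1)
    (m c ε : ℝ) (hm : 0 < m) (hc : 0 < c) (hε : 0 < ε) (hεlt : ε < m / (2 * c))
    (hclose : ∀ i j, |Ah i j - A i j| ≤ c * ε)
    (hrow : ∀ i, m ≤ ∑ j, A i j)
    (hrowh : ∀ i, m - c * ε ≤ ∑ j, Ah i j)
    (L Lh : Matrix (Fin M) (Fin M) ℝ)
    (hL : ∀ i j, L i j = A i j
      / (Real.sqrt (∑ j₁, A i j₁) * Real.sqrt (∑ i₁, A i₁ j)))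
    (hLh : ∀ i j, Lh i j = Ah i j
      / (Real.sqrt (∑ j₁, Ah i j₁) * Real.sqrt (∑ i₁, Ah i₁ j))) :
    ∀ i j, |Lh i j - L i j| ≤ 12 * (M : ℝ) ^ 3 * c * ε / m ^ 3 := by
  intro i j
  have hE : 0 < c * ε := mul_pos hc hε
  have hEm : c * ε < m / 2 := by
    rw [lt_div_iff₀ (by positivity)] at hεlt
    linarith
  have hM1 : (1:ℝ) ≤ (M:ℝ) := by exact_mod_cast le_trans (by norm_num) hM
  -- symmetry: column sums are row sums
  have hsymA : ∀ i j, A j i = A i j := fun i j => by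
    have := congrFun (congrFun hAsymm j) i
    simpa [Matrix.transpose_apply] using this.symm
  have hsymAh : ∀ i j, Ah j i = Ah i j := fun i j => by
    have := congrFun (congrFun hAhsymm j) i
    simpa [Matrix.transpose_apply] using this.symm
  have hcolA : (∑ i₁, A i₁ j) = ∑ j₁, A j j₁ := by
    apply Finset.sum_congr rfl
    intro k _; exact hsymA j k
  have hcolAh : (∑ i₁, Ah i₁ j) = ∑ j₁, Ah j j₁ := by
    apply Finset.sum_congr rfl
    intro k _; exact hsymAh j k
  -- row sum upper bounds
  have hrowub : ∀ i, (∑ j₁, A i j₁) ≤ (M:ℝ) := by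
    intro i
    calc (∑ j₁, A i j₁) ≤ ∑ _j₁ : Fin M, (1:ℝ) :=
          Finset.sum_le_sum (fun k _ => (hArange i k).2)
      _ = (M:ℝ) := by simp
  have hrowhub : ∀ i, (∑ j₁, Ah i j₁) ≤ (M:ℝ) := by
    intro i
    calc (∑ j₁, Ah i j₁) ≤ ∑ _j₁ : Fin M, (1:ℝ) :=
          Finset.sum_le_sum (fun k _ => (hAhrange i k).2)
      _ = (M:ℝ) := by simp
  have hmM : m ≤ (M:ℝ) := le_trans (hrow i) (hrowub i)
  -- row sum closeness
  have hrowclose : ∀ i, |(∑ j₁, Ah i j₁) - (∑ j₁, A i j₁)| ≤ (M:ℝ) * (c * ε) := by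
    intro i
    calc |(∑ j₁, Ah i j₁) - (∑ j₁, A i j₁)| = |∑ j₁, (Ah i j₁ - A i j₁)| := by
          rw [Finset.sum_sub_distrib]
      _ ≤ ∑ j₁, |Ah i j₁ - A i j₁| := Finset.abs_sum_le_sum_abs _ _
      _ ≤ ∑ _j₁ : Fin M, c * ε := Finset.sum_le_sum (fun k _ => hclose i k)
      _ = (M:ℝ) * (c * ε) := by simp
  rw [hL, hLh, hcolA, hcolAh]
  have := key_lemma m (M:ℝ) (c * ε) (A i j) (Ah i j)
    (∑ j₁, A i j₁) (∑ j₁, A j j₁) (∑ j₁, Ah i j₁) (∑ j₁, Ah j j₁)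
    hm hE hEm hM1 hmM
    (hrow i) (hrowub i) (hrow j) (hrowub j)
    (hrowh i) (hrowhub i) (hrowh j) (hrowhub j)
    (hrowclose i) (hrowclose j)
    (hArange i j).1 (hArange i j).2 (hclose i j)
  calc |Ah i j / (Real.sqrt (∑ j₁, Ah i j₁) * Real.sqrt (∑ j₁, Ah j j₁))
        - A i j / (Real.sqrt (∑ j₁, A i j₁) * Real.sqrt (∑ j₁, A j j₁))|
      ≤ 12 * (M:ℝ) ^ 3 * (c * ε) / m ^ 3 := this
    _ = 12 * (M:ℝ) ^ 3 * c * ε / m ^ 3 := by ring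
end
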